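/- arXiv:1302.4470 — 12 statements merged into one kernel-verified Lean document; each statement's English description precedes it below -/
import Mathlib

section
/- Let X be a vertex transitive graph and let φ be an endomorphism of X whose image is a core Y of X. Then all of the fibres φ⁻¹(y), for y a vertex of Y, have the same size. -/
open SimpleGraph

/-- A graph is vertex transitive if its automorphism group acts transitively on vertices. -/
def VertexTransitive {V : Type*} (X : SimpleGraph V) : Prop :=
  ∀ u v : V, ∃ σ : X ≃g X, σ u = v

/-- `S` is the vertex set of a core of `X`: a vertex-minimal (induced) subgraph
to which `X` admits a homomorphism. -/
def IsCoreSet {V : Type*} (X : SimpleGraph V) (S : Set V) : Prop :=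
  Nonempty (X →g X.induce S) ∧
    ∀ T : Set V, Nonempty (X →g X.induce T) → S.ncard ≤ T.ncard

/-- If `X` is vertex transitive and `φ` is an endomorphism of `X` whose image is a core
of `X`, then all fibres of `φ` over vertices of the core have the same size. -/
theorem stmt_0 {V : Type*} [Fintype V] (X : SimpleGraph V)
    (hvt : VertexTransitive X) (φ : X →g X)
    (hcore : IsCoreSet X (Set.range ⇑φ)) :
    ∀ y ∈ Set.range ⇑φ, ∀ z ∈ Set.range ⇑φ,
      (⇑φ ⁻¹' {y}).ncard = (⇑φ ⁻¹' {z}).ncard := by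
  classical
  intro y hy z hz
  set Y : Set V := Set.range ⇑φ with hYdef
  -- φ ∘ σ restricted to Y is a bijection of Y, for every automorphism σ
  have key : ∀ σ : X ≃g X, Set.BijOn (fun a => φ (σ a)) Y Y := by
    intro σ
    set f : V → V := fun a => φ (σ a) with hf
    have hmaps : ∀ a, f a ∈ Y := fun a => ⟨σ a, rfl⟩
    have himg : f '' Y ⊆ Y := by rintro _ ⟨a, _, rfl⟩; exact hmaps a
    have hhom : Nonempty (X →g X.induce (f '' Y)) := by
      refine ⟨⟨fun x => ⟨f (φ x), ⟨φ x, ⟨x, rfl⟩, rfl⟩⟩, ?_⟩⟩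
      intro a b hab
      exact φ.map_adj (σ.map_adj_iff.mpr (φ.map_adj hab))
    have hle : Y.ncard ≤ (f '' Y).ncard := hcore.2 _ hhom
    have hfinY : Y.Finite := Set.toFinite _
    have hge : (f '' Y).ncard ≤ Y.ncard := Set.ncard_image_le hfinY
    have heq : (f '' Y).ncard = Y.ncard := le_antisymm hge hle
    have hinj : Set.InjOn f Y := Set.injOn_of_ncard_image_eq heq hfinY
    have hsurj : f '' Y = Y := Set.eq_of_subset_of_ncard_le himg heq.ge hfinY
    exact ⟨fun a _ => hmaps a, hinj, hsurj.ge⟩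
  haveI : Finite (X ≃g X) := Finite.of_injective (fun σ => (σ : V ≃ V)) (fun a b h => by
    ext x; exact congrArg (fun e => e.toFun x) h)
  haveI : Fintype (X ≃g X) := Fintype.ofFinite _
  set Yfin : Finset V := Finset.univ.filter (· ∈ Y) with hYfin
  set fib : V → Finset V := fun w => Finset.univ.filter (fun v => φ v = w) with hfib
  set c : ℕ := (Finset.univ.filter (fun σ : X ≃g X => σ y = y)).card with hc
  -- stabilizer-type counts are all equal
  have hB : ∀ a v : V, (Finset.univ.filter (fun σ : X ≃g X => σ a = v)).card = c := by
    intro a v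
    obtain ⟨τ₁, hτ₁⟩ := hvt y a
    obtain ⟨τ₂, hτ₂⟩ := hvt v y
    rw [hc]
    refine Finset.card_bij' (fun σ _ => (τ₁.trans σ).trans τ₂)
      (fun σ' _ => (τ₁.symm.trans σ').trans τ₂.symm) ?_ ?_ ?_ ?_
    · intro σ hσ
      simp only [Finset.mem_filter, Finset.mem_univ, true_and] at hσ ⊢
      simp [RelIso.trans_apply, hτ₁, hσ, hτ₂]
    · intro σ' hσ'
      simp only [Finset.mem_filter, Finset.mem_univ, true_and] at hσ' ⊢
      have h1 : τ₁.symm a = y := by rw [← hτ₁]; exact τ₁.symm_apply_apply y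
      have h2 : τ₂.symm y = v := by rw [← hτ₂]; exact τ₂.symm_apply_apply v
      simp [RelIso.trans_apply, h1, hσ', h2]
    · intro σ _
      ext x
      simp [RelIso.trans_apply]
    · intro σ' _
      ext x
      simp [RelIso.trans_apply]
  have hcpos : 0 < c := by
    rw [hc]
    refine Finset.card_pos.mpr ⟨RelIso.refl _, ?_⟩
    simp [Finset.mem_filter]
  -- counting σ with φ (σ a) = w
  have hA : ∀ (a w : V), (Finset.univ.filter (fun σ : X ≃g X => φ (σ a) = w)).card
      = (fib w).card * c := by
    intro a w
    have hsplit : (Finset.univ.filter (fun σ : X ≃g X => φ (σ a) = w))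
        = (fib w).biUnion (fun v => Finset.univ.filter (fun σ : X ≃g X => σ a = v)) := by
      ext σ
      simp only [Finset.mem_filter, Finset.mem_univ, true_and, Finset.mem_biUnion, hfib]
      constructor
      · intro h; exact ⟨σ a, h, rfl⟩
      · rintro ⟨v, hv, rfl⟩; exact hv
    rw [hsplit, Finset.card_biUnion]
    · rw [Finset.sum_congr rfl (fun v _ => hB a v), Finset.sum_const, smul_eq_mul]
    · intro v₁ _ v₂ _ hne
      simp only [Finset.disjoint_left, Finset.mem_filter, Finset.mem_univ, true_and]
      rintro σ h1 h2
      exact hne (h1 ▸ h2 ▸ rfl)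
  -- main count
  have hcount : ∀ w ∈ Y, Yfin.card * ((fib w).card * c) = Fintype.card (X ≃g X) := by
    intro w hw
    have step1 : ∀ σ : X ≃g X, (Yfin.filter (fun v => φ (σ v) = w)).card = 1 := by
      intro σ
      obtain ⟨y', hy'Y, hy'⟩ := (key σ).surjOn hw
      rw [Finset.card_eq_one]
      refine ⟨y', ?_⟩
      ext v
      simp only [Finset.mem_filter, hYfin, Finset.mem_univ, true_and, Finset.mem_singleton]
      constructor
      · rintro ⟨hvY, hvw⟩
        exact (key σ).injOn hvY hy'Y (hvw.trans hy'.symm)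
      · rintro rfl; exact ⟨hy'Y, hy'⟩
    have swap : ∑ σ : X ≃g X, (Yfin.filter (fun v => φ (σ v) = w)).card
        = ∑ v ∈ Yfin, (Finset.univ.filter (fun σ : X ≃g X => φ (σ v) = w)).card := by
      simp only [Finset.card_filter]
      exact Finset.sum_comm
    have lhs : ∑ σ : X ≃g X, (Yfin.filter (fun v => φ (σ v) = w)).card
        = Fintype.card (X ≃g X) := by
      rw [Finset.sum_congr rfl (fun σ _ => step1 σ), Finset.sum_const, smul_eq_mul,
        mul_one, Finset.card_univ]
    rw [← lhs, swap, Finset.sum_congr rfl (fun v _ => hA v w), Finset.sum_const, smul_eq_mul]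
  -- conclude
  have heq2 : Yfin.card * ((fib y).card * c) = Yfin.card * ((fib z).card * c) := by
    rw [hcount y hy, hcount z hz]
  have hYpos : 0 < Yfin.card := by
    refine Finset.card_pos.mpr ⟨y, ?_⟩
    simp [hYfin, hy]
  have h3 : (fib y).card = (fib z).card := by
    have := Nat.eq_of_mul_eq_mul_left hYpos heq2
    exact Nat.eq_of_mul_eq_mul_right hcpos this
  have hset : ∀ w : V, (⇑φ ⁻¹' {w}) = ↑(fib w) := by
    intro w; ext v; simp [hfib]
  rw [hset y, hset z, Set.ncard_coe_finset, Set.ncard_coe_finset, h3]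
end

section
/- If X is a vertex transitive graph with core Y, then the number of vertices of Y divides the number of vertices of X. -/
open SimpleGraph

/-- If `X` is vertex transitive with core `Y` (with vertex set `S`), then the number of
vertices of the core divides the number of vertices of `X`. -/
theorem stmt_1 {V : Type*} [Fintype V] (X : SimpleGraph V)
    (hvt : VertexTransitive X) (S : Set V) (hS : IsCoreSet X S) :
    S.ncard ∣ Fintype.card V := by
  classical
  rcases isEmpty_or_nonempty V with hV | hV
  · simp [Fintype.card_eq_zero]
  obtain ⟨φ⟩ := hS.1
  obtain ⟨u₀⟩ := hV
  haveI : Fintype (X ≃g X) :=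
    Fintype.ofInjective (fun σ : X ≃g X => σ.toEquiv)
      (fun a b h => by cases a; cases b; simpa using h)
  -- Key: for every automorphism σ, the induced self-map of S is bijective
  have key : ∀ σ : X ≃g X, Function.Bijective (fun y : S => φ (σ (y : V))) := by
    intro σ
    set f : S → S := fun y => φ (σ (y : V)) with hf
    rw [← Finite.injective_iff_bijective]
    by_contra hinj
    have hsurj : ¬ Function.Surjective f := fun h =>
      hinj (Finite.injective_iff_surjective.mpr h)
    rw [Function.Surjective] at hsurj
    push_neg at hsurj
    obtain ⟨y, hy⟩ := hsurj
    set T : Set V := Set.range (fun x : S => (f x : V)) with hT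
    have hTS : T ⊆ S := by rintro _ ⟨x, rfl⟩; exact (f x).2
    have hyT : (y : V) ∉ T := by
      rintro ⟨x, hx⟩; exact hy x (Subtype.ext hx)
    have hssub : T ⊂ S := ⟨hTS, fun hST => hyT (hST y.2)⟩
    have hom : X →g X.induce T :=
      { toFun := fun v => ⟨(f (φ v) : V), ⟨φ v, rfl⟩⟩
        map_rel' := by
          intro a b hab
          have h1 : (X.induce S).Adj (φ a) (φ b) := φ.map_adj hab
          have h2 : X.Adj (φ a : V) (φ b : V) := h1
          have h3 : X.Adj (σ (φ a : V)) (σ (φ b : V)) := σ.map_rel_iff.mpr h2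
          have h4 : (X.induce S).Adj (φ (σ (φ a : V))) (φ (σ (φ b : V))) := φ.map_adj h3
          exact h4 }
    have hle := hS.2 T ⟨hom⟩
    have hlt : T.ncard < S.ncard := Set.ncard_lt_ncard hssub (Set.toFinite S)
    omega
  set y₀ : S := φ u₀ with hy₀
  set c : ℕ := (Finset.univ.filter fun σ : X ≃g X => σ u₀ = u₀).card with hcdef
  -- #{σ : σ u = v} is constant
  have hc : ∀ u v : V, (Finset.univ.filter fun σ : X ≃g X => σ u = v).card = c := by
    intro u v
    obtain ⟨τ₁, hτ₁⟩ := hvt u₀ u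
    obtain ⟨τ₂, hτ₂⟩ := hvt v u₀
    refine Finset.card_nbij' (fun σ => (τ₁.trans σ).trans τ₂)
      (fun σ => (τ₁.symm.trans σ).trans τ₂.symm) ?_ ?_ ?_ ?_
    · intro σ hσ
      simp only [Finset.mem_coe, Finset.mem_filter, Finset.mem_univ, true_and] at hσ ⊢
      simp [RelIso.trans_apply, hτ₁, hσ, hτ₂]
    · intro σ hσ
      simp only [Finset.mem_coe, Finset.mem_filter, Finset.mem_univ, true_and] at hσ ⊢
      have h1 : τ₁.symm u = u₀ := by rw [← hτ₁]; exact τ₁.symm_apply_apply u₀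
      have h2 : τ₂.symm u₀ = v := by rw [← hτ₂]; exact τ₂.symm_apply_apply v
      simp [RelIso.trans_apply, h1, hσ, h2]
    · intro σ _; ext x; simp
    · intro σ _; ext x; simp
  have hcpos : 0 < c := by
    rw [hcdef]
    exact Finset.card_pos.mpr ⟨RelIso.refl _, by simp⟩
  -- count the automorphism group two ways
  have hA : Fintype.card (X ≃g X) = Fintype.card V * c := by
    rw [← Finset.card_univ,
      Finset.card_eq_sum_card_fiberwise (f := fun σ : X ≃g X => σ u₀)
        (t := Finset.univ) (fun x _ => Finset.mem_univ _)]
    rw [Finset.sum_congr rfl (fun v _ => hc u₀ v), Finset.sum_const, Finset.card_univ,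
      smul_eq_mul]
  have key1 : ∀ σ : X ≃g X,
      (S.toFinset.filter fun y' => ((φ (σ y')) : V) = (y₀ : V)).card = 1 := by
    intro σ
    obtain ⟨hinj, hsurj⟩ := key σ
    obtain ⟨y', hy'⟩ := hsurj y₀
    rw [Finset.card_eq_one]
    refine ⟨(y' : V), ?_⟩
    ext z
    simp only [Finset.mem_filter, Set.mem_toFinset, Finset.mem_singleton]
    constructor
    · rintro ⟨hz, hz2⟩
      have h1 : (fun y : S => φ (σ (y : V))) ⟨z, hz⟩ = y₀ := Subtype.ext hz2
      exact congrArg Subtype.val (hinj (h1.trans hy'.symm))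
    · rintro rfl
      exact ⟨y'.2, congrArg Subtype.val hy'⟩
  have hB : Fintype.card (X ≃g X)
      = ∑ y' ∈ S.toFinset,
          (Finset.univ.filter fun σ : X ≃g X => ((φ (σ y')) : V) = (y₀ : V)).card := by
    rw [← Finset.card_univ]
    calc (Finset.univ : Finset (X ≃g X)).card
        = ∑ σ : X ≃g X, (S.toFinset.filter fun y' => ((φ (σ y')) : V) = (y₀ : V)).card := by
          rw [Finset.sum_congr rfl fun σ _ => key1 σ]; simp
      _ = ∑ σ : X ≃g X, ∑ y' ∈ S.toFinset,
            (if ((φ (σ y')) : V) = (y₀ : V) then 1 else 0) := by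
          simp only [Finset.card_filter]
      _ = ∑ y' ∈ S.toFinset, ∑ σ : X ≃g X,
            (if ((φ (σ y')) : V) = (y₀ : V) then 1 else 0) := Finset.sum_comm
      _ = _ := by simp only [Finset.card_filter]
  set Fb : Finset V := Finset.univ.filter (fun v : V => (φ v : V) = (y₀ : V)) with hFb
  have key2 : ∀ y' : V,
      (Finset.univ.filter fun σ : X ≃g X => ((φ (σ y')) : V) = (y₀ : V)).card
        = Fb.card * c := by
    intro y'
    rw [Finset.card_eq_sum_card_fiberwise (f := fun σ : X ≃g X => σ y') (t := Fb)
      (by intro σ hσ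
          simp only [Finset.mem_coe, Finset.mem_filter, Finset.mem_univ, true_and] at hσ
          simp only [hFb, Finset.mem_coe, Finset.mem_filter, Finset.mem_univ, true_and]
          exact hσ)]
    have : ∀ b ∈ Fb,
        ((Finset.univ.filter fun σ : X ≃g X => ((φ (σ y')) : V) = (y₀ : V)).filter
          fun σ => σ y' = b).card = c := by
      intro b hb
      rw [← hc y' b]
      congr 1
      ext σ
      simp only [Finset.mem_filter, Finset.mem_univ, true_and, hFb] at hb ⊢
      constructor
      · rintro ⟨_, h⟩; exact h
      · rintro rfl; exact ⟨hb, rfl⟩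
    rw [Finset.sum_congr rfl this, Finset.sum_const, smul_eq_mul]
  have hfinal : Fintype.card V * c = S.toFinset.card * Fb.card * c := by
    rw [← hA, hB, Finset.sum_congr rfl fun y' _ => key2 y', Finset.sum_const, smul_eq_mul]
    ring
  have hVeq : Fintype.card V = S.toFinset.card * Fb.card :=
    Nat.eq_of_mul_eq_mul_right hcpos hfinal
  rw [Set.ncard_eq_toFinset_card' S]
  exact ⟨Fb.card, hVeq⟩
end

section
/- Let φ be an endomorphism of a graph X such that φ(x) = φ(y) for distinct vertices x, y of X, and let w and z be two vertices that both lie in the image of some retraction of X onto a core of X. Then there is no automorphism σ of X that maps the pair {w, z} to the pair {x, y} (i.e., with {σ(w), σ(z)} = {x, y}). -/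
open SimpleGraph

/-- If `φ` is an endomorphism of `X` identifying two distinct vertices `x ≠ y`, and `w, z`
lie in the image of some retraction `ρ` of `X` onto a core of `X`, then no automorphism
of `X` maps the pair `{w, z}` to the pair `{x, y}`. -/
theorem stmt_2 {V : Type*} [Fintype V] (X : SimpleGraph V)
    (φ : X →g X) (x y : V) (hxy : x ≠ y) (hφ : φ x = φ y)
    (ρ : X →g X) (hρid : ∀ v ∈ Set.range ⇑ρ, ρ v = v)
    (hρcore : IsCoreSet X (Set.range ⇑ρ))
    (w z : V) (hw : w ∈ Set.range ⇑ρ) (hz : z ∈ Set.range ⇑ρ) :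
    ¬ ∃ σ : X ≃g X, ({σ w, σ z} : Set V) = {x, y} := by
  rintro ⟨σ, hσ⟩
  set S : Set V := Set.range ⇑ρ with hS
  let h : X →g X := ρ.comp ((σ.symm.toHom).comp (φ.comp (σ.toHom.comp ρ)))
  have hhv : ∀ v, h v = ρ (σ.symm (φ (σ (ρ v)))) := fun v => rfl
  have hσw : σ w ∈ ({x, y} : Set V) := hσ ▸ Set.mem_insert _ _
  have hσz : σ z ∈ ({x, y} : Set V) := hσ ▸ Set.mem_insert_iff.mpr (Or.inr rfl)
  have hymem : y ∈ ({σ w, σ z} : Set V) := hσ ▸ Set.mem_insert_iff.mpr (Or.inr rfl)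
  have hxmem : x ∈ ({σ w, σ z} : Set V) := hσ ▸ Set.mem_insert _ _
  have hσwz : φ (σ w) = φ (σ z) := by
    rcases hσw with h1 | h1 <;> rcases hσz with h2 | h2
    · exfalso
      rw [h1, h2, Set.ext_iff] at hσ
      have h3 := (hσ y).mpr (Or.inr rfl)
      simp only [Set.mem_insert_iff, Set.mem_singleton_iff, or_self] at h3
      exact hxy h3.symm
    · rw [h1, h2, hφ]
    · rw [h1, h2, hφ]
    · exfalso
      rw [h1, h2, Set.ext_iff] at hσ
      have h3 := (hσ x).mpr (Set.mem_insert _ _)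
      simp only [Set.mem_insert_iff, Set.mem_singleton_iff, or_self] at h3
      exact hxy h3
  have hwz : w ≠ z := by
    intro e
    apply hxy
    subst e
    rw [Set.ext_iff] at hσ
    have h3 := (hσ x).mpr (Set.mem_insert _ _)
    have h4 := (hσ y).mpr (Or.inr rfl)
    simp only [Set.mem_insert_iff, Set.mem_singleton_iff, or_self] at h3 h4
    rw [h3, h4]
  have hhwz : h w = h z := by rw [hhv, hhv, hρid w hw, hρid z hz, hσwz]
  have hcomp : ∀ v, h (ρ v) = h v := fun v => by
    rw [hhv, hhv, hρid (ρ v) ⟨v, rfl⟩]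
  have hrange : Set.range ⇑h = ⇑h '' S := by
    ext u
    constructor
    · rintro ⟨v, rfl⟩; exact ⟨ρ v, ⟨v, rfl⟩, hcomp v⟩
    · rintro ⟨v, _, rfl⟩; exact ⟨v, rfl⟩
  have hne : ¬ Set.InjOn ⇑h S := fun hinj => hwz (hinj hw hz hhwz)
  have hlt : (Set.range ⇑h).ncard < S.ncard := by
    rw [hrange]
    refine lt_of_le_of_ne (Set.ncard_image_le S.toFinite) ?_
    intro he
    exact hne (Set.injOn_of_ncard_image_eq he S.toFinite)
  have hhom : Nonempty (X →g X.induce (Set.range ⇑h)) :=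
    ⟨⟨fun v => ⟨h v, ⟨v, rfl⟩⟩, fun hadj => h.map_rel hadj⟩⟩
  exact absurd (hρcore.2 _ hhom) (not_le.mpr hlt)
end

section
/- Let G be a group and C ⊆ G∖{1} an inverse-closed set, and let X = X(G,C) be the corresponding Cayley graph. If φ is an endomorphism of X whose image is a core Y of X, and y is a vertex of Y, then the sets V(Y)a⁻¹ = {ca⁻¹ : c ∈ V(Y)}, for a ∈ φ⁻¹(y), are pairwise disjoint. -/
open SimpleGraph

/-- Let `X = X(G, C)` be a Cayley graph and `φ` an endomorphism of `X` whose image is a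
core `Y` of `X`.  For any vertex `y` of `Y`, the sets `V(Y)·a⁻¹` for `a ∈ φ⁻¹(y)` are
pairwise disjoint. -/
theorem stmt_3 {G : Type*} [Group G] [Fintype G] (C : Set G)
    (hC1 : (1 : G) ∉ C) (hCinv : ∀ c ∈ C, c⁻¹ ∈ C)
    (X : SimpleGraph G) (hX : ∀ g h : G, X.Adj g h ↔ g⁻¹ * h ∈ C)
    (φ : X →g X) (hcore : IsCoreSet X (Set.range ⇑φ))
    (y : G) (hy : y ∈ Set.range ⇑φ) :
    ∀ a ∈ ⇑φ ⁻¹' {y}, ∀ b ∈ ⇑φ ⁻¹' {y}, a ≠ b →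
      Disjoint ((fun c => c * a⁻¹) '' Set.range ⇑φ)
               ((fun c => c * b⁻¹) '' Set.range ⇑φ) := by
  intro a ha b hb hab
  have hay : φ a = y := ha
  have hby : φ b = y := hb
  rw [Set.disjoint_left]
  rintro u ⟨c, hc, rfl⟩ ⟨d, hd, hcd⟩
  -- hcd : d * b⁻¹ = c * a⁻¹
  set g := c * a⁻¹ with hg
  have hga : g⁻¹ * c = a := by rw [hg]; group
  have hgb : g⁻¹ * d = b := by
    have h2 : g = d * b⁻¹ := hcd.symm
    rw [h2]; group
  have hhom : ∀ x z : G, X.Adj x z → X.Adj (g⁻¹ * x) (g⁻¹ * z) := by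
    intro x z h
    rw [hX] at h ⊢
    simpa [mul_assoc] using h
  let ψ : X →g X := ⟨fun x => φ (g⁻¹ * x), fun h => φ.map_adj (hhom _ _ h)⟩
  have hT : Nonempty (X →g X.induce (⇑ψ '' Set.range ⇑φ)) := by
    refine ⟨⟨fun x => ⟨ψ (φ x), ⟨φ x, ⟨x, rfl⟩, rfl⟩⟩, ?_⟩⟩
    intro x z h
    exact ψ.map_adj (φ.map_adj h)
  have hle := hcore.2 _ hT
  have hge := Set.ncard_image_le (f := ⇑ψ) (s := Set.range ⇑φ) (Set.toFinite _)
  have hinj : Set.InjOn ⇑ψ (Set.range ⇑φ) :=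
    Set.injOn_of_ncard_image_eq (le_antisymm hge hle)
  have hcd' : c = d := by
    apply hinj hc hd
    show φ (g⁻¹ * c) = φ (g⁻¹ * d)
    rw [hga, hgb, hay, hby]
  exact hab (by rw [← hga, ← hgb, hcd'])
end

section
/- Let X = X(G,C) be a normal Cayley graph (i.e., g⁻¹Cg = C for all g ∈ G) and let Y be a core of X. Then there exists a partition {V₁, …, V_k} of the vertex set of X such that each V_i induces a subgraph of X isomorphic to Y. -/
open SimpleGraph

/-- If `X = X(G, C)` is a normal Cayley graph (i.e. `g⁻¹Cg = C` for all `g`) and `Y` is a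
core of `X` (induced on the vertex set `S`), then the vertex set of `X` can be partitioned
into sets each of which induces a subgraph of `X` isomorphic to `Y`. -/
theorem stmt_4 {G : Type*} [Group G] [Fintype G] (C : Set G)
    (hC1 : (1 : G) ∉ C) (hCinv : ∀ c ∈ C, c⁻¹ ∈ C)
    (hnormal : ∀ g : G, (fun c => g⁻¹ * c * g) '' C = C)
    (X : SimpleGraph G) (hX : ∀ g h : G, X.Adj g h ↔ g⁻¹ * h ∈ C)
    (S : Set G) (hS : IsCoreSet X S) :
    ∃ P : Set (Set G), Setoid.IsPartition P ∧
      ∀ T ∈ P, Nonempty ((X.induce T) ≃g (X.induce S)) := by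
  classical
  obtain ⟨⟨h⟩, hmin⟩ := hS
  set f : G → G := fun x => ((h x : S) : G) with hfdef
  have hfS : ∀ x, f x ∈ S := fun x => (h x).2
  have hfadj : ∀ {x y : G}, X.Adj x y → X.Adj (f x) (f y) := fun hxy => h.map_adj hxy
  have hconj : ∀ (g c : G), c ∈ C → g⁻¹ * c * g ∈ C := by
    intro g c hc
    have := hnormal g
    rw [← this]
    exact Set.mem_image_of_mem _ hc
  have hinvadj : ∀ (y : G) {a b : G}, X.Adj a b → X.Adj (y * a⁻¹) (y * b⁻¹) := by
    intro y a b hab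
    rw [hX] at hab ⊢
    have hC : ((a⁻¹)⁻¹ * (a⁻¹ * b)⁻¹ * a⁻¹ : G) ∈ C := hconj a⁻¹ _ (hCinv _ hab)
    have : (y * a⁻¹)⁻¹ * (y * b⁻¹) = (a⁻¹)⁻¹ * (a⁻¹ * b)⁻¹ * a⁻¹ := by group
    rw [this]; exact hC
  -- Key lemma: for every `y`, `f` is injective on `y * S⁻¹` and maps it onto `S`.
  have key : ∀ y : G, Set.InjOn f ((fun s => y * s⁻¹) '' S) ∧
      f '' ((fun s => y * s⁻¹) '' S) = S := by
    intro y
    set A : Set G := (fun s => y * s⁻¹) '' S with hA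
    have hinj : Function.Injective (fun s : G => y * s⁻¹) := by
      intro a b hab
      simpa using mul_left_cancel hab
    have hAcard : A.ncard = S.ncard := Set.ncard_image_of_injective _ hinj
    have hhom : X →g X.induce (f '' A) := by
      refine ⟨fun x => ⟨f (y * (f x)⁻¹), Set.mem_image_of_mem f ⟨f x, hfS x, rfl⟩⟩, ?_⟩
      intro a b hab
      exact hfadj (hinvadj y (hfadj hab))
    have hle : S.ncard ≤ (f '' A).ncard := hmin _ ⟨hhom⟩
    have hge : (f '' A).ncard ≤ A.ncard := Set.ncard_image_le A.toFinite
    have heq : (f '' A).ncard = A.ncard := le_antisymm hge (hAcard ▸ hle)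
    have hsub : f '' A ⊆ S := by
      rintro _ ⟨a, -, rfl⟩; exact hfS a
    refine ⟨Set.injOn_of_ncard_image_eq heq A.toFinite, ?_⟩
    exact Set.eq_of_subset_of_ncard_le hsub (by rw [heq, hAcard]) S.toFinite
  set s₀ : G := f 1 with hs₀
  have hs₀S : s₀ ∈ S := hfS 1
  -- Main fact: every `y` lies in exactly one translate `x * S` with `f x = s₀`.
  have main : ∀ y : G, ∃! x : G, f x = s₀ ∧ y ∈ (fun s => x * s) '' S := by
    intro y
    obtain ⟨hinjA, hsurjA⟩ := key y
    have hmem : s₀ ∈ f '' ((fun s => y * s⁻¹) '' S) := by rw [hsurjA]; exact hs₀S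
    obtain ⟨a, haA, hfa⟩ := hmem
    obtain ⟨s, hsS, has⟩ := haA
    refine ⟨a, ⟨hfa, ⟨s, hsS, ?_⟩⟩, ?_⟩
    · rw [← has]; group
    · rintro x ⟨hxf, t, htS, hxt⟩
      have hxA : x ∈ (fun s => y * s⁻¹) '' S := ⟨t, htS, by rw [← hxt]; group⟩
      have haA' : a ∈ (fun s => y * s⁻¹) '' S := ⟨s, hsS, has⟩
      exact hinjA hxA haA' (by rw [hxf, hfa])
  refine ⟨(fun x => (fun s => x * s) '' S) '' {x | f x = s₀}, ⟨?_, ?_⟩, ?_⟩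
  · rintro ⟨x, -, hxe⟩
    have : x * s₀ ∈ (∅ : Set G) := hxe ▸ ⟨s₀, hs₀S, rfl⟩
    exact this
  · intro y
    obtain ⟨x, ⟨hxf, hymem⟩, huniq⟩ := main y
    refine ⟨(fun s => x * s) '' S, ⟨⟨x, hxf, rfl⟩, hymem⟩, ?_⟩
    rintro B ⟨⟨x', hx'f, rfl⟩, hyB⟩
    rw [huniq x' ⟨hx'f, hyB⟩]
  · rintro T ⟨x, -, rfl⟩
    refine ⟨⟨⟨fun u => ⟨x⁻¹ * u.1, ?_⟩, fun s => ⟨x * s.1, ⟨s.1, s.2, rfl⟩⟩, ?_, ?_⟩, ?_⟩⟩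
    · obtain ⟨s, hs, hu⟩ := u.2
      rw [← hu, inv_mul_cancel_left]; exact hs
    · intro u; exact Subtype.ext (by simp)
    · intro s; exact Subtype.ext (by simp)
    · intro a b
      show X.Adj (x⁻¹ * a.1) (x⁻¹ * b.1) ↔ X.Adj a.1 b.1
      have hab : (x⁻¹ * a.1)⁻¹ * (x⁻¹ * b.1) = a.1⁻¹ * b.1 := by group
      rw [hX, hX, hab]
end

section
/- Suppose X is a vertex transitive graph with a core X₁ such that |V(X₁)| = ½|V(X)|, let φ: X → X₁ be a retraction onto X₁, and let X₂ be the subgraph of X induced by V(X) ∖ V(X₁). Then X₂ is isomorphic to X₁. -/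
set_option linter.unusedSectionVars false

open SimpleGraph

namespace StmtSixAux

open Finset

/-- Every endomorphism of a core is injective. -/
lemma aux_core_endo_inj {V : Type*} [Fintype V] (X : SimpleGraph V) (S : Set V)
    (hS : IsCoreSet X S) (f : X.induce S →g X.induce S) : Function.Injective f := by
  by_contra hinj
  have hsurj : ¬ Function.Surjective f := fun h => hinj (Finite.injective_iff_surjective.mpr h)
  obtain ⟨g⟩ := hS.1
  set T : Set V := Subtype.val '' Set.range f with hT
  have hmem : ∀ v : V, (f (g v) : V) ∈ T := fun v => ⟨f (g v), Set.mem_range_self _, rfl⟩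
  have hhom : Nonempty (X →g X.induce T) := by
    refine ⟨⟨fun v => ⟨(f (g v) : V), hmem v⟩, ?_⟩⟩
    intro a b hab
    have h1 := f.map_adj (g.map_adj hab)
    simpa using h1
  have hle := hS.2 T hhom
  have hTcard : T.ncard = (Set.range f).ncard :=
    Set.ncard_image_of_injective _ Subtype.val_injective
  have hne : Set.range f ≠ Set.univ := fun h => hsurj (Set.range_eq_univ.mp h)
  have hlt : (Set.range f).ncard < S.ncard := by
    have h2 : (Set.range f).ncard < (Set.univ : Set ↥S).ncard :=
      Set.ncard_lt_ncard (Set.ssubset_univ_iff.mpr hne) Set.finite_univ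
    rwa [Set.ncard_univ, Nat.card_coe_set_eq] at h2
  omega

section

variable {V : Type*} [Fintype V] [DecidableEq V] (X : SimpleGraph V) [Fintype (X ≃g X)]

/-- Composition-with-τ equivalence on automorphisms. -/
def transEquiv (τ : X ≃g X) : (X ≃g X) ≃ (X ≃g X) where
  toFun σ := σ.trans τ
  invFun σ := σ.trans τ.symm
  left_inv σ := by ext x; simp
  right_inv σ := by ext x; simp

/-- Inversion equivalence on automorphisms. -/
def symmEquiv : (X ≃g X) ≃ (X ≃g X) where
  toFun σ := σ.symm
  invFun σ := σ.symm
  left_inv σ := by ext x; rfl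
  right_inv σ := by ext x; rfl

lemma aux_count_step1 (v w w' : V) (τ : X ≃g X) (hτ : τ w = w') :
    (univ.filter fun σ : X ≃g X => σ v = w).card
      = (univ.filter fun σ : X ≃g X => σ v = w').card := by
  apply card_equiv (transEquiv X τ)
  intro σ
  simp only [mem_filter, mem_univ, true_and, transEquiv]
  constructor
  · rintro rfl; simp [hτ]
  · intro h
    have : τ (σ v) = τ w := by simpa [hτ] using h
    exact τ.injective this

lemma aux_count_step2 (v w : V) :
    (univ.filter fun σ : X ≃g X => σ v = w).card
      = (univ.filter fun σ : X ≃g X => σ w = v).card := by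
  apply card_equiv (symmEquiv X)
  intro σ
  simp only [mem_filter, mem_univ, true_and, symmEquiv]
  constructor
  · rintro rfl; simp
  · intro h; rw [← h]; simp

/-- By vertex transitivity, the number of automorphisms sending `v` to `w` does not
depend on `v` or `w`. -/
lemma aux_count_const (hvt : VertexTransitive X) (v w v' w' : V) :
    (univ.filter fun σ : X ≃g X => σ v = w).card
      = (univ.filter fun σ : X ≃g X => σ v' = w').card := by
  obtain ⟨τ₁, hτ₁⟩ := hvt w v'
  obtain ⟨τ₂, hτ₂⟩ := hvt v w'
  calc (univ.filter fun σ : X ≃g X => σ v = w).card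
      = (univ.filter fun σ : X ≃g X => σ v = v').card := aux_count_step1 X v w v' τ₁ hτ₁
    _ = (univ.filter fun σ : X ≃g X => σ v' = v).card := aux_count_step2 X v v'
    _ = (univ.filter fun σ : X ≃g X => σ v' = w').card := aux_count_step1 X v' v w' τ₂ hτ₂

/-- A vertex-transitive graph is regular. -/
lemma aux_regular [DecidableRel X.Adj] (hvt : VertexTransitive X) (u v : V) :
    (univ.filter fun w => X.Adj u w).card = (univ.filter fun w => X.Adj v w).card := by
  obtain ⟨σ, hσ⟩ := hvt u v
  apply card_equiv σ.toEquiv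
  intro w
  simp only [mem_filter, mem_univ, true_and]
  rw [← hσ]
  exact (σ.map_adj_iff).symm

/-- Every fibre of a retraction of a vertex-transitive graph onto a half-size core
has exactly two elements. -/
lemma aux_fiber_two (hvt : VertexTransitive X) (S : Set V) [DecidablePred (· ∈ S)]
    (hS : IsCoreSet X S) (hhalf : 2 * S.ncard = Fintype.card V)
    (φ : X →g X) (hran : Set.range ⇑φ = S)
    (v₀ : V) : ∀ s ∈ S, (univ.filter fun v => φ v = s).card = 2 := by
  set S' : Finset V := S.toFinset with hS'
  have hS'card : S'.card = S.ncard := (Set.ncard_eq_toFinset_card' S).symm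
  have hφmem : ∀ v : V, φ v ∈ S := by
    intro v; rw [← hran]; exact Set.mem_range_self v
  have hS'mem : ∀ v : V, φ v ∈ S' := fun v => Set.mem_toFinset.mpr (hφmem v)
  have hcardV : 0 < Fintype.card V := Fintype.card_pos_iff.mpr ⟨v₀⟩
  have hS'pos : 0 < S'.card := by omega
  -- injectivity of φ ∘ σ on S
  have hinj : ∀ σ : X ≃g X, ∀ a b : V, a ∈ S → b ∈ S → φ (σ a) = φ (σ b) → a = b := by
    intro σ a b ha hb hab
    let f : X.induce S →g X.induce S :=
      { toFun := fun x => ⟨φ (σ x), hφmem _⟩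
        map_rel' := by
          intro x y hxy
          simp only [comap_adj, Function.Embedding.coe_subtype] at hxy ⊢
          exact φ.map_adj (σ.map_rel_iff.mpr hxy) }
    have h1 : f ⟨a, ha⟩ = f ⟨b, hb⟩ := Subtype.ext hab
    have h2 := aux_core_endo_inj X S hS f h1
    exact congrArg Subtype.val h2
  set c : ℕ := (univ.filter fun σ : X ≃g X => σ v₀ = v₀).card with hc
  have hcpos : 0 < c := by
    rw [hc]
    apply card_pos.mpr
    exact ⟨RelIso.refl _, mem_filter.mpr ⟨mem_univ _, rfl⟩⟩
  -- Claim 1 : each translate of the core meets each fibre exactly once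
  have hC1 : ∀ σ : X ≃g X, ∀ s ∈ S', ((S'.image σ).filter fun v => φ v = s).card = 1 := by
    intro σ
    have hle : ∀ s ∈ S', ((S'.image σ).filter fun v => φ v = s).card ≤ 1 := by
      intro s _
      apply card_le_one.mpr
      intro a ha b hb
      simp only [mem_filter, mem_image] at ha hb
      obtain ⟨⟨x, hx, rfl⟩, hpa⟩ := ha
      obtain ⟨⟨y, hy, rfl⟩, hpb⟩ := hb
      exact congrArg σ (hinj σ x y (Set.mem_toFinset.mp hx) (Set.mem_toFinset.mp hy)
        (hpa.trans hpb.symm))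
    have hsum : (∑ s ∈ S', ((S'.image σ).filter fun v => φ v = s).card) = S'.card := by
      have h1 : ∀ s, ((S'.image σ).filter fun v => φ v = s).card
          = ∑ v ∈ S'.image σ, if φ v = s then 1 else 0 := fun s => card_filter _ _
      simp only [h1]
      rw [Finset.sum_comm]
      have h2 : ∀ v ∈ S'.image σ, (∑ s ∈ S', if φ v = s then 1 else 0) = 1 := by
        intro v _
        rw [Finset.sum_ite_eq S' (φ v) (fun _ => 1)]
        simp [hS'mem v]
      rw [Finset.sum_congr rfl h2, Finset.sum_const, smul_eq_mul, mul_one]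
      exact Finset.card_image_of_injective S' σ.injective
    intro s hs
    by_contra hne
    have hlt : ((S'.image σ).filter fun v => φ v = s).card < 1 :=
      lt_of_le_of_ne (hle s hs) hne
    have : (∑ t ∈ S', ((S'.image σ).filter fun v => φ v = t).card) < ∑ t ∈ S', 1 :=
      Finset.sum_lt_sum hle ⟨s, hs, hlt⟩
    rw [hsum, Finset.sum_const, smul_eq_mul, mul_one] at this
    omega
  -- Claim 2 : double counting over all automorphisms
  have hC2 : ∀ s : V, (∑ σ : X ≃g X, ((S'.image σ).filter fun v => φ v = s).card)
      = (univ.filter fun v => φ v = s).card * (S'.card * c) := by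
    intro s
    have h1 : ∀ σ : X ≃g X, ((S'.image σ).filter fun v => φ v = s).card
        = ∑ w ∈ univ.filter (fun v => φ v = s), if w ∈ S'.image σ then 1 else 0 := by
      intro σ
      rw [← card_filter]
      congr 1
      ext w
      simp only [mem_filter, mem_univ, true_and]
      tauto
    simp only [h1]
    rw [Finset.sum_comm]
    have h2 : ∀ w : V, (∑ σ : X ≃g X, if w ∈ S'.image σ then 1 else 0) = S'.card * c := by
      intro w
      have h3 : ∀ σ : X ≃g X, (if w ∈ S'.image σ then 1 else 0)
          = ∑ a ∈ S', if σ a = w then 1 else 0 := by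
        intro σ
        rw [← card_filter]
        by_cases h : w ∈ S'.image σ
        · rw [if_pos h]
          obtain ⟨a, ha, rfl⟩ := mem_image.mp h
          have : S'.filter (fun b => σ b = σ a) = {a} := by
            ext b
            simp only [mem_filter, mem_singleton]
            constructor
            · rintro ⟨_, hba⟩; exact σ.injective hba
            · rintro rfl; exact ⟨ha, rfl⟩
          rw [this, card_singleton]
        · rw [if_neg h]
          have : S'.filter (fun b => σ b = w) = ∅ := by
            ext b
            simp only [mem_filter, notMem_empty, iff_false, not_and]
            intro hb hbw
            exact h (mem_image.mpr ⟨b, hb, hbw⟩)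
          rw [this, card_empty]
      simp only [h3]
      rw [Finset.sum_comm]
      have h4 : ∀ a ∈ S', (∑ σ : X ≃g X, if σ a = w then 1 else 0) = c := by
        intro a _
        rw [← card_filter]
        exact aux_count_const X hvt a w v₀ v₀
      rw [Finset.sum_congr rfl h4, Finset.sum_const, smul_eq_mul]
    rw [Finset.sum_congr rfl (fun w _ => h2 w), Finset.sum_const, smul_eq_mul]
  -- fibres all have the same size
  have hsame : ∀ s ∈ S', (univ.filter fun v => φ v = s).card * (S'.card * c)
      = Fintype.card (X ≃g X) := by
    intro s hs
    rw [← hC2 s]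
    rw [Finset.sum_congr rfl (fun σ _ => hC1 σ s hs)]
    simp [Finset.card_univ]
  -- the fibre sizes sum to the number of vertices
  have hsumfib : (∑ s ∈ S', (univ.filter fun v => φ v = s).card) = Fintype.card V := by
    have h1 : ∀ s, (univ.filter fun v => φ v = s).card
        = ∑ v : V, if φ v = s then 1 else 0 := fun s => card_filter _ _
    simp only [h1]
    rw [Finset.sum_comm]
    have h2 : ∀ v : V, (∑ s ∈ S', if φ v = s then 1 else 0) = 1 := by
      intro v
      rw [Finset.sum_ite_eq S' (φ v) (fun _ => 1)]
      simp [hS'mem v]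
    rw [Finset.sum_congr rfl (fun v _ => h2 v)]
    simp [Finset.card_univ]
  intro s hsS
  have hs : s ∈ S' := Set.mem_toFinset.mpr hsS
  have hkey : ∀ t ∈ S', (univ.filter fun v => φ v = t).card
      = (univ.filter fun v => φ v = s).card := by
    intro t ht
    have := (hsame t ht).trans (hsame s hs).symm
    exact Nat.eq_of_mul_eq_mul_right (Nat.mul_pos hS'pos hcpos) this
  rw [Finset.sum_congr rfl hkey, Finset.sum_const, smul_eq_mul] at hsumfib
  rw [hS'card] at hsumfib
  have hpos : 0 < S.ncard := by omega
  have h5 : S.ncard * (univ.filter fun v => φ v = s).card = S.ncard * 2 := by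
    rw [hsumfib, ← hhalf, mul_comm]
  exact Nat.eq_of_mul_eq_mul_left hpos h5

/-- In a regular graph, if `S` contains half the vertices then the number of ordered
adjacent pairs inside `S` equals the number of ordered adjacent pairs inside `Sᶜ`. -/
lemma aux_pairs_eq [DecidableRel X.Adj] (hvt : VertexTransitive X) (S : Set V)
    [DecidablePred (· ∈ S)] (hhalf : 2 * S.ncard = Fintype.card V) (v₀ : V) :
    (univ.filter fun p : V × V => p.1 ∈ S ∧ p.2 ∈ S ∧ X.Adj p.1 p.2).card
      = (univ.filter fun p : V × V => p.1 ∉ S ∧ p.2 ∉ S ∧ X.Adj p.1 p.2).card := by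
  set d : ℕ := (univ.filter fun w => X.Adj v₀ w).card with hd
  have hdeg : ∀ v : V, (univ.filter fun w => X.Adj v w).card = d := fun v =>
    aux_regular X hvt v v₀
  have e1 : (univ.filter fun p : V × V => p.1 ∈ S ∧ p.2 ∈ S ∧ X.Adj p.1 p.2).card
      = ∑ v : V, ∑ w : V, if v ∈ S ∧ w ∈ S ∧ X.Adj v w then 1 else 0 := by
    rw [card_filter, Fintype.sum_prod_type]
  have e2 : (univ.filter fun p : V × V => p.1 ∉ S ∧ p.2 ∉ S ∧ X.Adj p.1 p.2).card
      = ∑ v : V, ∑ w : V, if v ∉ S ∧ w ∉ S ∧ X.Adj v w then 1 else 0 := by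
    rw [card_filter, Fintype.sum_prod_type]
  rw [e1, e2]
  -- row sums
  have hrow1 : ∀ v : V, (∑ w : V, if v ∈ S ∧ w ∈ S ∧ X.Adj v w then 1 else 0)
      + (∑ w : V, if v ∈ S ∧ w ∉ S ∧ X.Adj v w then 1 else 0)
      = (if v ∈ S then d else 0) := by
    intro v
    rw [← Finset.sum_add_distrib]
    have h1 : ∀ w : V, ((if v ∈ S ∧ w ∈ S ∧ X.Adj v w then 1 else 0)
        + (if v ∈ S ∧ w ∉ S ∧ X.Adj v w then 1 else 0))
        = (if v ∈ S ∧ X.Adj v w then 1 else 0) := by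
      intro w
      by_cases hv : v ∈ S <;> by_cases hw : w ∈ S <;> by_cases ha : X.Adj v w <;>
        simp [hv, hw, ha]
    rw [Finset.sum_congr rfl fun w _ => h1 w]
    by_cases hv : v ∈ S
    · simp only [hv, true_and, if_true]
      rw [← card_filter]
      exact hdeg v
    · simp [hv]
  have hrow2 : ∀ v : V, (∑ w : V, if v ∉ S ∧ w ∉ S ∧ X.Adj v w then 1 else 0)
      + (∑ w : V, if v ∉ S ∧ w ∈ S ∧ X.Adj v w then 1 else 0)
      = (if v ∉ S then d else 0) := by
    intro v
    rw [← Finset.sum_add_distrib]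
    have h1 : ∀ w : V, ((if v ∉ S ∧ w ∉ S ∧ X.Adj v w then 1 else 0)
        + (if v ∉ S ∧ w ∈ S ∧ X.Adj v w then 1 else 0))
        = (if v ∉ S ∧ X.Adj v w then 1 else 0) := by
      intro w
      by_cases hv : v ∈ S <;> by_cases hw : w ∈ S <;> by_cases ha : X.Adj v w <;>
        simp [hv, hw, ha]
    rw [Finset.sum_congr rfl fun w _ => h1 w]
    by_cases hv : v ∈ S
    · simp [hv]
    · simp only [hv, not_false_iff, true_and, if_true]
      rw [← card_filter]
      exact hdeg v
  -- the two cross sums are equal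
  have hcross : (∑ v : V, ∑ w : V, if v ∈ S ∧ w ∉ S ∧ X.Adj v w then 1 else 0)
      = (∑ v : V, ∑ w : V, if v ∉ S ∧ w ∈ S ∧ X.Adj v w then 1 else 0) := by
    rw [Finset.sum_comm]
    apply Finset.sum_congr rfl
    intro v _
    apply Finset.sum_congr rfl
    intro w _
    exact if_congr (by rw [X.adj_comm]; tauto) rfl rfl
  -- column totals
  have hSfin : (univ.filter fun v => v ∈ S) = S.toFinset := by
    ext v; simp
  have hcardS : (univ.filter fun v => v ∈ S).card = S.ncard := by
    rw [hSfin, ← Set.ncard_eq_toFinset_card']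
  have hcardC : (univ.filter fun v => v ∉ S).card = S.ncard := by
    have h := Finset.card_filter_add_card_filter_not (s := (univ : Finset V))
      (p := fun v => v ∈ S)
    rw [Finset.card_univ] at h
    omega
  have htot1 : (∑ v : V, if v ∈ S then d else 0) = S.ncard * d := by
    rw [← Finset.sum_filter, Finset.sum_const, smul_eq_mul, hcardS]
  have htot2 : (∑ v : V, if v ∉ S then d else 0) = S.ncard * d := by
    rw [← Finset.sum_filter, Finset.sum_const, smul_eq_mul, hcardC]
  have hA : (∑ v : V, ∑ w : V, if v ∈ S ∧ w ∈ S ∧ X.Adj v w then 1 else 0)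
      + (∑ v : V, ∑ w : V, if v ∈ S ∧ w ∉ S ∧ X.Adj v w then 1 else 0) = S.ncard * d := by
    rw [← Finset.sum_add_distrib, Finset.sum_congr rfl fun v _ => hrow1 v, htot1]
  have hB : (∑ v : V, ∑ w : V, if v ∉ S ∧ w ∉ S ∧ X.Adj v w then 1 else 0)
      + (∑ v : V, ∑ w : V, if v ∉ S ∧ w ∈ S ∧ X.Adj v w then 1 else 0) = S.ncard * d := by
    rw [← Finset.sum_add_distrib, Finset.sum_congr rfl fun v _ => hrow2 v, htot2]
  omega

end

end StmtSixAux

/-- If `X` is vertex transitive with a core `X₁` (induced on `S`) of half its size, `φ` is a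
retraction of `X` onto `X₁`, and `X₂` is the subgraph induced by the complement of `S`,
then `X₂` is isomorphic to `X₁`. -/
theorem stmt_6 {V : Type*} [Fintype V] (X : SimpleGraph V)
    (hvt : VertexTransitive X) (S : Set V) (hS : IsCoreSet X S)
    (hhalf : 2 * S.ncard = Fintype.card V)
    (φ : X →g X) (hran : Set.range ⇑φ = S) (hid : ∀ v ∈ S, φ v = v) :
    Nonempty ((X.induce Sᶜ) ≃g (X.induce S)) := by
  classical
  open Finset StmtSixAux in
  haveI : Fintype (X ≃g X) :=
    Fintype.ofInjective (fun σ : X ≃g X => σ.toEquiv) RelIso.toEquiv_injective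
  rcases isEmpty_or_nonempty V with hV | hV
  · -- degenerate case : no vertices at all
    haveI : IsEmpty ↥(Sᶜ) := ⟨fun u => hV.elim u.1⟩
    haveI : IsEmpty ↥S := ⟨fun u => hV.elim u.1⟩
    exact ⟨⟨Equiv.equivOfIsEmpty _ _, fun {a b} => isEmptyElim a⟩⟩
  · obtain ⟨v₀⟩ := hV
    have hφmem : ∀ v : V, φ v ∈ S := by
      intro v; rw [← hran]; exact Set.mem_range_self v
    have hfib := aux_fiber_two X hvt S hS hhalf φ hran v₀
    -- φ is injective outside of S
    have hinjC : ∀ u w : V, u ∉ S → w ∉ S → φ u = φ w → u = w := by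
      intro u w hu hw huw
      by_contra hne
      have hs : φ u ∈ S := hφmem u
      have hsub : ({u, w, φ u} : Finset V) ⊆ univ.filter fun v => φ v = φ u := by
        intro x hx
        simp only [Finset.mem_insert, Finset.mem_singleton] at hx
        rcases hx with rfl | rfl | rfl
        · simp
        · simp [huw.symm]
        · simp [hid _ hs]
      have hcard3 : ({u, w, φ u} : Finset V).card = 3 := by
        rw [Finset.card_insert_of_notMem, Finset.card_insert_of_notMem, Finset.card_singleton]
        · simp only [Finset.mem_singleton]
          intro h; exact hw (h ▸ hs)
        · simp only [Finset.mem_insert, Finset.mem_singleton]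
          rintro (h | h)
          · exact hne h
          · exact hu (h ▸ hs)
      have hle := Finset.card_le_card hsub
      rw [hcard3, hfib (φ u) hs] at hle
      omega
    -- the bijection from Sᶜ to S
    have hcards : Fintype.card ↥(Sᶜ) = Fintype.card ↥S := by
      have h1 : S.ncard + Sᶜ.ncard = Fintype.card V := by
        rw [← Nat.card_eq_fintype_card]
        exact Set.ncard_add_ncard_compl S
      have h2 : Sᶜ.ncard = S.ncard := by omega
      rw [← Nat.card_eq_fintype_card, ← Nat.card_eq_fintype_card,
        Nat.card_coe_set_eq, Nat.card_coe_set_eq, h2]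
    set f : ↥(Sᶜ) → ↥S := fun u => ⟨φ u, hφmem u⟩ with hf
    have hfinj : Function.Injective f := by
      intro a b hab
      have h1 : φ (a : V) = φ (b : V) := congrArg Subtype.val hab
      exact Subtype.ext (hinjC a b a.2 b.2 h1)
    have hfbij : Function.Bijective f :=
      (Fintype.bijective_iff_injective_and_card f).mpr ⟨hfinj, hcards⟩
    set e : ↥(Sᶜ) ≃ ↥S := Equiv.ofBijective f hfbij with he
    -- pair counting : image of adjacent pairs fills all adjacent pairs of S
    set PS : Finset (V × V) := univ.filter fun p : V × V => p.1 ∈ S ∧ p.2 ∈ S ∧ X.Adj p.1 p.2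
      with hPS
    set PC : Finset (V × V) := univ.filter fun p : V × V => p.1 ∉ S ∧ p.2 ∉ S ∧ X.Adj p.1 p.2
      with hPC
    have hcardPP : PS.card = PC.card := aux_pairs_eq X hvt S hhalf v₀
    set Fm : V × V → V × V := fun p => (φ p.1, φ p.2) with hFm
    have himg : PC.image Fm ⊆ PS := by
      intro q hq
      obtain ⟨p, hp, rfl⟩ := Finset.mem_image.mp hq
      rw [hPC] at hp
      simp only [Finset.mem_filter, Finset.mem_univ, true_and] at hp
      rw [hPS]
      simp only [Finset.mem_filter, Finset.mem_univ, true_and, hFm]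
      exact ⟨hφmem _, hφmem _, φ.map_adj hp.2.2⟩
    have hinjOn : Set.InjOn Fm ↑PC := by
      intro p hp q hq hpq
      rw [hPC] at hp hq
      simp only [Finset.coe_filter, Set.mem_setOf_eq, Finset.mem_univ, true_and] at hp hq
      have h1 : φ p.1 = φ q.1 := congrArg Prod.fst hpq
      have h2 : φ p.2 = φ q.2 := congrArg Prod.snd hpq
      exact Prod.ext (hinjC _ _ hp.1 hq.1 h1) (hinjC _ _ hp.2.1 hq.2.1 h2)
    have himgeq : PC.image Fm = PS := by
      apply Finset.eq_of_subset_of_card_le himg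
      rw [Finset.card_image_of_injOn hinjOn]
      omega
    -- the reverse adjacency implication
    have hback : ∀ u w : V, u ∉ S → w ∉ S → X.Adj (φ u) (φ w) → X.Adj u w := by
      intro u w hu hw hadj
      have hmem : (φ u, φ w) ∈ PS := by
        rw [hPS]
        simp only [Finset.mem_filter, Finset.mem_univ, true_and]
        exact ⟨hφmem u, hφmem w, hadj⟩
      rw [← himgeq] at hmem
      obtain ⟨p, hp, hpe⟩ := Finset.mem_image.mp hmem
      rw [hPC] at hp
      simp only [Finset.mem_filter, Finset.mem_univ, true_and] at hp
      have h1 : φ p.1 = φ u := congrArg Prod.fst hpe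
      have h2 : φ p.2 = φ w := congrArg Prod.snd hpe
      have hp1 : p.1 = u := hinjC _ _ hp.1 hu h1
      have hp2 : p.2 = w := hinjC _ _ hp.2.1 hw h2
      rw [← hp1, ← hp2]
      exact hp.2.2
    -- assemble the isomorphism
    refine ⟨⟨e, ?_⟩⟩
    intro a b
    simp only [he, comap_adj, Function.Embedding.coe_subtype, Equiv.ofBijective_apply, hf]
    constructor
    · intro h
      exact hback a b a.2 b.2 h
    · intro h
      exact φ.map_adj h
end

section
/- Suppose X is a vertex transitive graph with a core X₁ such that |V(X₁)| = ½|V(X)|, let φ: X → X₁ be a retraction onto X₁, and let X₂ be the subgraph of X induced by V(X) ∖ V(X₁). Then the restriction of φ to V(X₂) is an isomorphism from X₂ to X₁. -/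
open SimpleGraph

lemma core_inj {V : Type*} [Fintype V] (X : SimpleGraph V) (S : Set V) (hS : IsCoreSet X S)
    (ψ : X →g X) (hr : Set.range ⇑ψ = S) : Set.InjOn ψ S ∧ ψ '' S = S := by
  have himg : ψ '' S ⊆ S := by
    rintro _ ⟨a, _, rfl⟩
    rw [← hr]; exact Set.mem_range_self a
  have hmem : ∀ v : V, ψ v ∈ S := fun v => by rw [← hr]; exact Set.mem_range_self v
  have hom2 : Nonempty (X →g X.induce (ψ '' S)) :=
    ⟨⟨fun v => ⟨ψ (ψ v), ⟨ψ v, hmem v, rfl⟩⟩, fun h => ψ.map_adj (ψ.map_adj h)⟩⟩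
  have hle := hS.2 _ hom2
  have heq : ψ '' S = S := Set.eq_of_subset_of_ncard_le himg hle (Set.toFinite S)
  exact ⟨Set.injOn_of_ncard_image_eq (by rw [heq]) (Set.toFinite S), heq⟩

lemma fiber_card {V : Type*} [Fintype V] [DecidableEq V] (X : SimpleGraph V)
    (hvt : VertexTransitive X) (S : Set V) (hS : IsCoreSet X S)
    (hhalf : 2 * S.ncard = Fintype.card V) (hpos : 0 < Fintype.card V)
    (φ : X →g X) (hran : Set.range ⇑φ = S) (hid : ∀ v ∈ S, φ v = v)
    (y : V) (hy : y ∈ S) :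
    (Finset.univ.filter (fun v => φ v = y)).card = 2 := by
  classical
  haveI : Fintype (X ≃g X) :=
    Fintype.ofInjective (fun σ : X ≃g X => (σ : V ≃ V))
      (fun σ τ h => by cases σ; cases τ; simp only [RelIso.mk.injEq]; exact h)
  set Sf := S.toFinset with hSf
  have hySf : y ∈ Sf := Set.mem_toFinset.mpr hy
  have hScard : Sf.card = S.ncard := (Set.ncard_eq_toFinset_card' S).symm
  have hSpos : 0 < Sf.card := by
    rw [hScard]; omega
  set G := (Finset.univ : Finset (X ≃g X)) with hG
  -- counting stabilizer cosets: the number of σ with σ z = w is constant in w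
  have hc : ∀ z w w' : V,
      (G.filter (fun σ : X ≃g X => σ z = w)).card
        = (G.filter (fun σ : X ≃g X => σ z = w')).card := by
    intro z w w'
    obtain ⟨τ, hτ⟩ := hvt w w'
    refine Finset.card_bij' (fun σ _ => σ.trans τ) (fun σ _ => σ.trans τ.symm) ?_ ?_ ?_ ?_
    · intro σ hσ
      simp only [Finset.mem_filter, hG, Finset.mem_univ, true_and] at hσ ⊢
      simp [RelIso.trans_apply, hσ, hτ]
    · intro σ hσ
      simp only [Finset.mem_filter, hG, Finset.mem_univ, true_and] at hσ ⊢
      simp [RelIso.trans_apply, hσ, ← hτ]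
    · intro σ _; ext v; simp
    · intro σ _; ext v; simp
  have hcG : ∀ z w : V, Fintype.card V * (G.filter (fun σ : X ≃g X => σ z = w)).card
      = G.card := by
    intro z w
    have h1 : G.card = ∑ w' : V, (G.filter (fun σ : X ≃g X => σ z = w')).card :=
      Finset.card_eq_sum_card_fiberwise (fun σ _ => Finset.mem_univ (σ z))
    rw [h1, Finset.sum_congr rfl (fun w' _ => (hc z w' w))]
    simp [Finset.sum_const, Finset.card_univ, mul_comm]
  -- key bijection property for each automorphism
  have hkey : ∀ σ : X ≃g X, (Sf.filter (fun z => φ (σ z) = y)).card = 1 := by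
    intro σ
    have hcoe : ⇑(φ.comp σ.toHom) = fun v => φ (σ v) := rfl
    have hhom : Set.range ⇑(φ.comp σ.toHom) = S := by
      rw [hcoe]
      have h2 : Set.range (fun v => φ (σ v)) = ⇑φ '' Set.range ⇑σ := by
        rw [← Set.range_comp]; rfl
      rw [h2, (EquivLike.surjective σ).range_eq, Set.image_univ, hran]
    obtain ⟨hinj, himg⟩ := core_inj X S hS (φ.comp σ.toHom) hhom
    rw [hcoe] at hinj himg
    obtain ⟨z, hzS, hzy⟩ : ∃ z ∈ S, φ (σ z) = y := by
      have h3 := hy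
      rw [← himg] at h3
      simpa using h3
    rw [Finset.card_eq_one]
    refine ⟨z, ?_⟩
    ext a
    simp only [Finset.mem_filter, Finset.mem_singleton, Set.mem_toFinset]
    constructor
    · rintro ⟨haS, hay⟩
      exact hinj (Set.mem_toFinset.mp haS) hzS
        (show φ (σ a) = φ (σ z) by rw [hay, hzy])
    · rintro rfl
      exact ⟨Set.mem_toFinset.mpr hzS, hzy⟩
  -- double counting
  have hA1 : ∑ σ : X ≃g X, (Sf.filter (fun z => φ (σ z) = y)).card = G.card := by
    rw [Finset.sum_congr rfl (fun σ _ => hkey σ)]; simp [hG]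
  set Fy := Finset.univ.filter (fun v => φ v = y) with hFy
  have hA2 : Fintype.card V * ∑ σ : X ≃g X, (Sf.filter (fun z => φ (σ z) = y)).card
      = Sf.card * Fy.card * G.card := by
    have hswap : ∑ σ : X ≃g X, (Sf.filter (fun z => φ (σ z) = y)).card
        = ∑ z ∈ Sf, (G.filter (fun σ : X ≃g X => φ (σ z) = y)).card := by
      simp only [Finset.card_filter, hG]
      exact Finset.sum_comm
    have hfib : ∀ z ∈ Sf, (G.filter (fun σ : X ≃g X => φ (σ z) = y)).card
        = ∑ w ∈ Fy, (G.filter (fun σ : X ≃g X => σ z = w)).card := by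
      intro z _
      have h1 : (G.filter (fun σ : X ≃g X => φ (σ z) = y)).card
          = ∑ w ∈ Fy, ((G.filter (fun σ : X ≃g X => φ (σ z) = y)).filter
              (fun σ => σ z = w)).card :=
        Finset.card_eq_sum_card_fiberwise (fun σ hσ => by
          simp only [hFy, Finset.mem_coe, Finset.mem_filter, Finset.mem_univ, true_and] at hσ ⊢
          exact hσ.2)
      rw [h1]
      refine Finset.sum_congr rfl (fun w hw => ?_)
      congr 1
      rw [Finset.filter_filter]
      refine Finset.filter_congr (fun σ _ => ?_)
      simp only [hFy, Finset.mem_filter, Finset.mem_univ, true_and] at hw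
      constructor
      · rintro ⟨_, h⟩; exact h
      · rintro rfl; exact ⟨hw, rfl⟩
    rw [hswap, Finset.sum_congr rfl hfib, Finset.mul_sum]
    have : ∀ z ∈ Sf, Fintype.card V * ∑ w ∈ Fy, (G.filter (fun σ : X ≃g X => σ z = w)).card
        = Fy.card * G.card := by
      intro z _
      rw [Finset.mul_sum, Finset.sum_congr rfl (fun w _ => hcG z w)]
      simp [mul_comm]
    rw [Finset.sum_congr rfl this]
    simp only [Finset.sum_const, smul_eq_mul]
    ring
  have hGpos : 0 < G.card := Finset.card_pos.mpr ⟨RelIso.refl _, Finset.mem_univ _⟩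
  rw [hA1] at hA2
  have h5 : Sf.card * Fy.card = Fintype.card V :=
    Nat.eq_of_mul_eq_mul_right hGpos hA2.symm
  have h6 : Sf.card * Fy.card = Sf.card * 2 := by
    rw [h5, ← hhalf, ← hScard, mul_comm]
  exact Nat.eq_of_mul_eq_mul_left hSpos h6

/-- If `X` is vertex transitive with a core `X₁` (induced on `S`) of half its size, `φ` is a
retraction of `X` onto `X₁`, and `X₂` is the subgraph induced by the complement of `S`,
then the restriction of `φ` to `V(X₂)` is an isomorphism from `X₂` to `X₁`. -/
theorem stmt_7 {V : Type*} [Fintype V] (X : SimpleGraph V)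
    (hvt : VertexTransitive X) (S : Set V) (hS : IsCoreSet X S)
    (hhalf : 2 * S.ncard = Fintype.card V)
    (φ : X →g X) (hran : Set.range ⇑φ = S) (hid : ∀ v ∈ S, φ v = v) :
    ∃ e : (X.induce Sᶜ) ≃g (X.induce S), ∀ x : ↥(Sᶜ), (e x : V) = φ (x : V) := by
  classical
  rcases Nat.eq_zero_or_pos (Fintype.card V) with hn0 | hpos
  · -- degenerate case: V is empty
    haveI : IsEmpty V := Fintype.card_eq_zero_iff.mp hn0
    haveI : IsEmpty ↥(Sᶜ) := ⟨fun x => isEmptyElim (x : V)⟩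
    haveI : IsEmpty ↥S := ⟨fun x => isEmptyElim (x : V)⟩
    exact ⟨⟨Equiv.equivOfIsEmpty _ _, fun {a} => isEmptyElim a⟩, fun x => isEmptyElim x⟩
  have hmem : ∀ v : V, φ v ∈ S := fun v => by rw [← hran]; exact Set.mem_range_self v
  have hfib := fun y hy => fiber_card X hvt S hS hhalf hpos φ hran hid y hy
  -- injectivity of φ on Sᶜ
  have hinj : Set.InjOn ⇑φ Sᶜ := by
    intro u hu w hw huw
    by_contra hne
    have hyS : φ u ∈ S := hmem u
    have h3 : ({u, w, φ u} : Finset V) ⊆ Finset.univ.filter (fun v => φ v = φ u) := by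
      intro a ha
      simp only [Finset.mem_insert, Finset.mem_singleton] at ha
      rcases ha with rfl | rfl | rfl <;>
        simp [huw.symm, hid _ hyS]
    have h1 : u ≠ w := hne
    have h2 : u ≠ φ u := fun h => hu (by rw [h]; exact hyS)
    have h3' : w ≠ φ u := fun h => hw (by rw [h]; exact hyS)
    have hcard3 : ({u, w, φ u} : Finset V).card = 3 := by
      rw [Finset.card_insert_of_notMem (by simp [h1, h2]),
        Finset.card_insert_of_notMem (by simp [h3']), Finset.card_singleton]
    have := Finset.card_le_card h3
    rw [hfib (φ u) hyS, hcard3] at this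
    omega
  -- surjectivity of φ from Sᶜ onto S
  have hsurj : ∀ y ∈ S, ∃ u ∈ Sᶜ, φ u = y := by
    intro y hy
    have h2 := hfib y hy
    have hysub : ¬ (Finset.univ.filter (fun v => φ v = y) ⊆ {y}) := by
      intro hsub
      have := Finset.card_le_card hsub
      rw [h2] at this
      simp at this
    obtain ⟨u, hu1, hu2⟩ : ∃ u, φ u = y ∧ u ≠ y := by
      by_contra hc
      push_neg at hc
      exact hysub (fun a ha => by
        simp only [Finset.mem_filter] at ha
        simp [hc a ha.2])
    refine ⟨u, fun huS => ?_, hu1⟩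
    exact hu2 ((hid u huS) ▸ hu1)
  -- regularity of X
  set d : V → ℕ := fun u => (Finset.univ.filter (fun w => X.Adj u w)).card with hd
  have hreg : ∀ u v : V, d u = d v := by
    intro u v
    obtain ⟨σ, hσ⟩ := hvt u v
    refine Finset.card_bij' (fun w _ => σ w) (fun w _ => σ.symm w) ?_ ?_ ?_ ?_
    · intro w hw
      simp only [Finset.mem_filter, Finset.mem_univ, true_and] at hw ⊢
      rw [← hσ]
      exact σ.map_rel_iff.mpr hw
    · intro w hw
      simp only [Finset.mem_filter, Finset.mem_univ, true_and] at hw ⊢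
      have h2 : X.Adj (σ.symm v) (σ.symm w) := σ.symm.map_rel_iff.mpr hw
      rwa [← hσ, RelIso.symm_apply_apply] at h2
    · intro w _; simp
    · intro w _; simp
  set Sf := S.toFinset with hSf
  set T := Sfᶜ with hT
  have hTmem : ∀ u : V, u ∈ T ↔ u ∈ Sᶜ := by
    intro u; simp [hT, hSf, Set.mem_toFinset]
  have hScard : Sf.card = S.ncard := (Set.ncard_eq_toFinset_card' S).symm
  have hTcard : T.card = Sf.card := by
    have h2 : T.card = Fintype.card V - Sf.card := Finset.card_compl Sf
    omega
  obtain ⟨v₀⟩ : Nonempty V := Fintype.card_pos_iff.mp hpos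
  have hdeg : ∀ A : Finset V, ∑ u ∈ A, d u = A.card * d v₀ := by
    intro A
    rw [Finset.sum_congr rfl (fun u _ => hreg u v₀), Finset.sum_const, smul_eq_mul]
  have hsplit : ∀ A : Finset V, ∑ u ∈ A, d u =
      (∑ u ∈ A, ∑ w ∈ A, ite (X.Adj u w) 1 0)
        + (∑ u ∈ A, ∑ w ∈ Aᶜ, ite (X.Adj u w) 1 0) := by
    intro A
    rw [← Finset.sum_add_distrib]
    refine Finset.sum_congr rfl (fun u _ => ?_)
    rw [hd]
    simp only [Finset.card_filter]
    exact (Finset.sum_add_sum_compl A _).symm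
  have hcross : ∀ A B : Finset V, ∑ u ∈ A, ∑ w ∈ B, ite (X.Adj u w) 1 0
      = ∑ u ∈ B, ∑ w ∈ A, ite (X.Adj u w) 1 0 := by
    intro A B
    rw [Finset.sum_comm]
    exact Finset.sum_congr rfl fun u _ => Finset.sum_congr rfl fun w _ =>
      if_congr (X.adj_comm w u) rfl rfl
  have hE : ∑ u ∈ T, ∑ w ∈ T, ite (X.Adj u w) 1 0
      = ∑ u ∈ Sf, ∑ w ∈ Sf, ite (X.Adj u w) 1 0 := by
    have h1 := hsplit Sf
    have h2 := hsplit T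
    rw [hdeg Sf] at h1
    rw [hdeg T, hTcard] at h2
    have h3 : ∑ u ∈ T, ∑ w ∈ Tᶜ, ite (X.Adj u w) 1 0
        = ∑ u ∈ Sf, ∑ w ∈ Sfᶜ, ite (X.Adj u w) 1 0 := by
      rw [hT, compl_compl, ← hT]
      exact hcross T Sf
    rw [h3] at h2
    omega
  -- pair counting
  set PT := (T ×ˢ T).filter (fun p => X.Adj p.1 p.2) with hPT
  set PS := (Sf ×ˢ Sf).filter (fun p => X.Adj p.1 p.2) with hPS
  have hPTcard : PT.card = ∑ u ∈ T, ∑ w ∈ T, ite (X.Adj u w) 1 0 := by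
    rw [hPT, Finset.card_filter, Finset.sum_product]
  have hPScard : PS.card = ∑ u ∈ Sf, ∑ w ∈ Sf, ite (X.Adj u w) 1 0 := by
    rw [hPS, Finset.card_filter, Finset.sum_product]
  set F : V × V → V × V := fun p => (φ p.1, φ p.2) with hF
  have himgsub : PT.image F ⊆ PS := by
    intro p hp
    simp only [Finset.mem_image] at hp
    obtain ⟨q, hq, rfl⟩ := hp
    simp only [hPT, hPS, Finset.mem_filter, Finset.mem_product] at hq ⊢
    exact ⟨⟨Set.mem_toFinset.mpr (hmem q.1), Set.mem_toFinset.mpr (hmem q.2)⟩,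
      φ.map_adj hq.2⟩
  have hinjF : Set.InjOn F PT := by
    rintro ⟨a, b⟩ hab ⟨c, e⟩ hce h
    simp only [hPT, Finset.coe_filter, Set.mem_setOf_eq, Finset.mem_product] at hab hce
    simp only [hF, Prod.mk.injEq] at h
    have ha : a ∈ Sᶜ := (hTmem a).mp hab.1.1
    have hb : b ∈ Sᶜ := (hTmem b).mp hab.1.2
    have hcm : c ∈ Sᶜ := (hTmem c).mp hce.1.1
    have hem : e ∈ Sᶜ := (hTmem e).mp hce.1.2
    exact Prod.ext (hinj ha hcm h.1) (hinj hb hem h.2)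
  have himg_eq : PT.image F = PS := by
    refine Finset.eq_of_subset_of_card_le himgsub ?_
    rw [Finset.card_image_of_injOn hinjF, hPTcard, hPScard] at *
    omega
  have hreflect : ∀ u ∈ Sᶜ, ∀ w ∈ Sᶜ, X.Adj (φ u) (φ w) → X.Adj u w := by
    intro u hu w hw hadj
    have hmemP : (φ u, φ w) ∈ PS := by
      simp only [hPS, Finset.mem_filter, Finset.mem_product]
      exact ⟨⟨Set.mem_toFinset.mpr (hmem u), Set.mem_toFinset.mpr (hmem w)⟩, hadj⟩
    rw [← himg_eq] at hmemP
    simp only [Finset.mem_image] at hmemP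
    obtain ⟨⟨a, b⟩, hq, heq⟩ := hmemP
    simp only [hPT, Finset.mem_filter, Finset.mem_product] at hq
    simp only [hF, Prod.mk.injEq] at heq
    have ha : a = u := hinj ((hTmem a).mp hq.1.1) hu heq.1
    have hb : b = w := hinj ((hTmem b).mp hq.1.2) hw heq.2
    rw [← ha, ← hb]
    exact hq.2
  -- build the isomorphism
  have hbij : Function.Bijective (fun x : ↥(Sᶜ) => (⟨φ x, hmem x⟩ : ↥S)) := by
    constructor
    · intro a b h
      have : φ (a : V) = φ (b : V) := congrArg Subtype.val h
      exact Subtype.ext (hinj a.2 b.2 this)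
    · intro y
      obtain ⟨u, hu, hq⟩ := hsurj y y.2
      exact ⟨⟨u, hu⟩, Subtype.ext hq⟩
  refine ⟨⟨Equiv.ofBijective _ hbij, ?_⟩, fun x => rfl⟩
  intro a b
  exact ⟨fun h => hreflect a a.2 b b.2 h, fun h => φ.map_adj h⟩
end

section
/- Suppose X is a vertex transitive graph with a core X₁ such that |V(X₁)| = ½|V(X)|, let φ: X → X₁ be a retraction onto X₁, let X₂ be the subgraph of X induced by V(X) ∖ V(X₁), and let Y be the bipartite graph on V(X) consisting of the edges of X with exactly one end in each of V(X₁) and V(X₂). Then Y is regular of degree d − d₁, where d is the common degree of vertices of X and d₁ is the common degree of vertices of X₁, and every edge of Y has the form {x, φ(y)} for some vertices x, y ∈ V(X₂) that are adjacent in X₂. -/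
open SimpleGraph

/-- The bipartite graph consisting of the edges of `X` having exactly one end in `S` and
one end in `Sᶜ`. -/
def crossGraph {V : Type*} (X : SimpleGraph V) (S : Set V) : SimpleGraph V where
  Adj u v := X.Adj u v ∧ ((u ∈ S ∧ v ∉ S) ∨ (u ∉ S ∧ v ∈ S))
  symm := by
    constructor
    rintro u v ⟨hadj, h | h⟩
    · exact ⟨hadj.symm, Or.inr ⟨h.2, h.1⟩⟩
    · exact ⟨hadj.symm, Or.inl ⟨h.2, h.1⟩⟩
  loopless := by
    constructor
    rintro u ⟨-, ⟨h1, h2⟩ | ⟨h1, h2⟩⟩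
    · exact h2 h1
    · exact h1 h2

/-- If `X` is vertex transitive with a set `S` of half its vertices such that some map
is injective on every automorphic image of `S`, then that map is injective on `Sᶜ`. -/
private lemma stmt8_inj_compl {V : Type*} [Fintype V] (X : SimpleGraph V)
    (hvt : VertexTransitive X)
    (S : Set V) (hhalf : 2 * S.ncard = Fintype.card V) (f : V → V)
    (hinjS : ∀ σ : X ≃g X, Set.InjOn f (⇑σ '' S)) : Set.InjOn f Sᶜ := by
  classical
  intro x hx y hy hfxy
  by_contra hne
  set P : Finset (Equiv.Perm V) :=
    Finset.univ.filter (fun σ => ∀ u v, X.Adj (σ u) (σ v) ↔ X.Adj u v) with hP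
  have hmemP : ∀ σ : Equiv.Perm V, σ ∈ P ↔ ∀ u v, X.Adj (σ u) (σ v) ↔ X.Adj u v := by
    intro σ; simp [hP]
  have hisoP : ∀ τ : X ≃g X, (τ : Equiv.Perm V) ∈ P := by
    intro τ; rw [hmemP]; intro u v; exact τ.map_adj_iff
  have hcount : ∀ (z t t' : V),
      (P.filter (fun σ => σ t = z)).card = (P.filter (fun σ => σ t' = z)).card := by
    intro z t t'
    obtain ⟨ρ₀, hρ₀⟩ := hvt t' t
    set ρ : Equiv.Perm V := (ρ₀ : Equiv.Perm V) with hρdef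
    have hρP : ∀ u v, X.Adj (ρ u) (ρ v) ↔ X.Adj u v := (hmemP ρ).mp (hisoP ρ₀)
    have hρiP : ∀ u v, X.Adj (ρ⁻¹ u) (ρ⁻¹ v) ↔ X.Adj u v := by
      intro u v
      conv_rhs => rw [← Equiv.apply_symm_apply ρ u, ← Equiv.apply_symm_apply ρ v]
      exact (hρP _ _).symm
    have hρt : ρ t' = t := hρ₀
    refine Finset.card_bij' (fun σ _ => σ * ρ) (fun σ _ => σ * ρ⁻¹) ?_ ?_ ?_ ?_
    · intro σ hσ
      rw [Finset.mem_filter] at hσ ⊢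
      obtain ⟨hσP, hσt⟩ := hσ
      have hσadj := (hmemP σ).mp hσP
      refine ⟨(hmemP _).mpr fun u v => ?_, ?_⟩
      · rw [Equiv.Perm.mul_apply, Equiv.Perm.mul_apply, hσadj, hρP]
      · show σ (ρ t') = z
        rw [hρt]; exact hσt
    · intro σ hσ
      rw [Finset.mem_filter] at hσ ⊢
      obtain ⟨hσP, hσt⟩ := hσ
      have hσadj := (hmemP σ).mp hσP
      refine ⟨(hmemP _).mpr fun u v => ?_, ?_⟩
      · rw [Equiv.Perm.mul_apply, Equiv.Perm.mul_apply, hσadj, hρiP]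
      · show σ (ρ⁻¹ t) = z
        rw [show ρ⁻¹ t = t' by rw [← hρt, Equiv.Perm.coe_inv, Equiv.symm_apply_apply]]
        exact hσt
    · intro σ _; simp [mul_assoc]
    · intro σ _; simp [mul_assoc]
  set Sf : Finset V := S.toFinset with hSf
  have hSfcard : Sf.card = S.ncard := (Set.ncard_eq_toFinset_card' S).symm
  set k : V → ℕ := fun z => (P.filter (fun σ => σ x = z)).card with hk
  have hA : ∀ z : V, (P.filter (fun σ => σ⁻¹ z ∈ S)).card = Sf.card * k z := by
    intro z
    have h1 : (P.filter (fun σ => σ⁻¹ z ∈ S)).card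
        = ∑ t ∈ Sf, ((P.filter (fun σ => σ⁻¹ z ∈ S)).filter (fun σ => σ⁻¹ z = t)).card := by
      apply Finset.card_eq_sum_card_fiberwise
      intro σ hσ
      rw [Finset.mem_coe, Finset.mem_filter] at hσ
      simpa [hSf] using hσ.2
    rw [h1]
    have h2 : ∀ t ∈ Sf, ((P.filter (fun σ => σ⁻¹ z ∈ S)).filter (fun σ => σ⁻¹ z = t)).card
        = k z := by
      intro t ht
      have : (P.filter (fun σ => σ⁻¹ z ∈ S)).filter (fun σ => σ⁻¹ z = t)
          = P.filter (fun σ => σ t = z) := by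
        ext σ
        simp only [Finset.mem_filter]
        constructor
        · rintro ⟨⟨h1, -⟩, h3⟩
          exact ⟨h1, by rw [← h3, Equiv.Perm.coe_inv, Equiv.apply_symm_apply]⟩
        · rintro ⟨h1, h2⟩
          have h3 : σ⁻¹ z = t := by rw [← h2, Equiv.Perm.coe_inv, Equiv.symm_apply_apply]
          exact ⟨⟨h1, h3 ▸ by simpa [hSf] using ht⟩, h3⟩
      rw [this, hk]
      exact hcount z t x
    rw [Finset.sum_congr rfl h2, Finset.sum_const, smul_eq_mul]
  have hPcard : ∀ z : V, P.card = Fintype.card V * k z := by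
    intro z
    have h1 : P.card = ∑ t ∈ Finset.univ, (P.filter (fun σ => σ⁻¹ z = t)).card :=
      Finset.card_eq_sum_card_fiberwise (fun σ _ => Finset.mem_univ _)
    rw [h1]
    have h2 : ∀ t ∈ (Finset.univ : Finset V), (P.filter (fun σ => σ⁻¹ z = t)).card = k z := by
      intro t _
      have : P.filter (fun σ => σ⁻¹ z = t) = P.filter (fun σ => σ t = z) := by
        ext σ
        simp only [Finset.mem_filter]
        constructor
        · rintro ⟨h1, h3⟩
          exact ⟨h1, by rw [← h3, Equiv.Perm.coe_inv, Equiv.apply_symm_apply]⟩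
        · rintro ⟨h1, h2⟩
          exact ⟨h1, by rw [← h2, Equiv.Perm.coe_inv, Equiv.symm_apply_apply]⟩
      rw [this, hk]
      exact hcount z t x
    rw [Finset.sum_congr rfl h2, Finset.sum_const, smul_eq_mul, Finset.card_univ]
  have hne' : Nonempty V := ⟨x⟩
  have hnpos : 0 < Fintype.card V := Fintype.card_pos
  have hkxy : k x = k y := by
    have := (hPcard x).symm.trans (hPcard y)
    exact Nat.eq_of_mul_eq_mul_left hnpos this
  by_cases hmeet : ∃ σ ∈ P, σ⁻¹ x ∈ S ∧ σ⁻¹ y ∈ S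
  · obtain ⟨σ, hσP, hσx, hσy⟩ := hmeet
    have hσadj := (hmemP σ).mp hσP
    set τ : X ≃g X := ⟨σ, fun {u v} => hσadj u v⟩ with hτ
    have hxm : x ∈ ⇑τ '' S := ⟨σ⁻¹ x, hσx, by simp [hτ, Equiv.apply_symm_apply]⟩
    have hym : y ∈ ⇑τ '' S := ⟨σ⁻¹ y, hσy, by simp [hτ, Equiv.apply_symm_apply]⟩
    exact hne (hinjS τ hxm hym hfxy)
  · push_neg at hmeet
    set Ax := P.filter (fun σ => σ⁻¹ x ∈ S) with hAx
    set Ay := P.filter (fun σ => σ⁻¹ y ∈ S) with hAy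
    have hsub : Ay ⊆ P \ Ax := by
      intro σ hσ
      have h1 := Finset.mem_filter.mp hσ
      refine Finset.mem_sdiff.mpr ⟨h1.1, fun hmem => ?_⟩
      exact hmeet σ h1.1 (Finset.mem_filter.mp hmem).2 h1.2
    have hcardAx : Ax.card = Sf.card * k x := hA x
    have hcardAy : Ay.card = Sf.card * k x := by rw [hA y, hkxy]
    have hcardP : P.card = 2 * Sf.card * k x := by
      rw [hPcard x, ← hhalf, hSfcard]
    have hcardsdiff : (P \ Ax).card = Sf.card * k x := by
      rw [Finset.card_sdiff_of_subset (Finset.filter_subset _ _), hcardP, hcardAx]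
      have h2 : 2 * Sf.card * k x = 2 * (Sf.card * k x) := by ring
      rw [h2]; omega
    have heq : Ay = P \ Ax :=
      Finset.eq_of_subset_of_card_le hsub (hcardsdiff.trans hcardAy.symm).le
    have h1P : (1 : Equiv.Perm V) ∈ P := (hmemP 1).mpr (by simp)
    have h1 : (1 : Equiv.Perm V) ∈ P \ Ax :=
      Finset.mem_sdiff.mpr ⟨h1P, fun h => hx (by simpa using (Finset.mem_filter.mp h).2)⟩
    rw [← heq] at h1
    exact hy (by simpa using (Finset.mem_filter.mp h1).2)

/-- Let `X` be vertex transitive with a core `X₁` (induced on `S`) of half its size,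
`φ` a retraction of `X` onto `X₁`, `X₂` the subgraph induced on `Sᶜ`, and `Y` the
bipartite graph of edges of `X` with exactly one end in each of `S` and `Sᶜ`.  If `X` is
regular of degree `d` and `X₁` is regular of degree `d₁`, then `Y` is regular of degree
`d - d₁` and every edge of `Y` has the form `{x, φ(y)}` for vertices `x, y ∈ Sᶜ` adjacent
in `X₂`. -/
theorem stmt_8 {V : Type*} [Fintype V] (X : SimpleGraph V)
    (hvt : VertexTransitive X) (S : Set V) (hS : IsCoreSet X S)
    (hhalf : 2 * S.ncard = Fintype.card V)
    (φ : X →g X) (hran : Set.range ⇑φ = S) (hid : ∀ v ∈ S, φ v = v)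
    (d d₁ : ℕ) (hd : ∀ v : V, (X.neighborSet v).ncard = d)
    (hd₁ : ∀ v : ↥S, ((X.induce S).neighborSet v).ncard = d₁) :
    (∀ v : V, ((crossGraph X S).neighborSet v).ncard = d - d₁) ∧
      (∀ u v : V, (crossGraph X S).Adj u v →
        ∃ x y : V, x ∉ S ∧ y ∉ S ∧ X.Adj x y ∧ s(u, v) = s(x, φ y)) := by
  classical
  rcases isEmpty_or_nonempty V with hV | hV
  · exact ⟨fun v => isEmptyElim v, fun u v _ => isEmptyElim u⟩
  -- basic facts
  have hφS : ∀ v : V, φ v ∈ S := fun v => hran ▸ Set.mem_range_self v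
  have hSne : ∃ s, s ∈ S := ⟨φ (Classical.arbitrary V), hφS _⟩
  -- induced degrees expressed as intersections
  have hd₁' : ∀ s (hs : s ∈ S), (X.neighborSet s ∩ S).ncard = d₁ := by
    intro s hs
    have himg : Subtype.val '' ((X.induce S).neighborSet ⟨s, hs⟩)
        = X.neighborSet s ∩ S := by
      ext w
      simp only [Set.mem_image, SimpleGraph.mem_neighborSet, Set.mem_inter_iff,
        SimpleGraph.comap_adj, SimpleGraph.induce_eq_coe_induce_top]
      constructor
      · rintro ⟨⟨w', hw'⟩, hadj, rfl⟩
        exact ⟨(show s ∈ S ∧ w' ∈ S ∧ X.Adj s w' from hadj).2.2, hw'⟩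
      · rintro ⟨hadj, hw⟩
        exact ⟨⟨w, hw⟩, (⟨hs, hw, hadj⟩ : s ∈ S ∧ w ∈ S ∧ X.Adj s w), rfl⟩
    rw [← hd₁ ⟨s, hs⟩, ← Set.ncard_image_of_injective _ Subtype.val_injective, himg]
  have hd₁d : d₁ ≤ d := by
    obtain ⟨s, hs⟩ := hSne
    rw [← hd₁' s hs, ← hd s]
    exact Set.ncard_le_ncard Set.inter_subset_left (Set.toFinite _)
  -- degrees from S side
  have hdegS : ∀ v ∈ S, (X.neighborSet v \ S).ncard = d - d₁ := by
    intro v hv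
    have := Set.ncard_inter_add_ncard_diff_eq_ncard (X.neighborSet v) S (Set.toFinite _)
    rw [hd₁' v hv, hd v] at this
    omega
  -- injectivity of φ on Sᶜ
  have L1 : ∀ f : X →g X, S.ncard ≤ (Set.range ⇑f).ncard := fun f =>
    hS.2 _ ⟨⟨fun v => ⟨f v, Set.mem_range_self v⟩, fun h => f.map_adj h⟩⟩
  have L2 : ∀ σ : X ≃g X, Set.InjOn ⇑φ (⇑σ '' S) := by
    intro σ
    have hf := L1 (φ.comp ((σ.toEmbedding.toHom).comp φ))
    have hrange : Set.range ⇑(φ.comp ((σ.toEmbedding.toHom).comp φ)) = ⇑φ '' (⇑σ '' S) := by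
      rw [← hran]
      ext w
      simp [SimpleGraph.Hom.comp, Set.range_comp]
    rw [hrange] at hf
    have hsub : ⇑φ '' (⇑σ '' S) ⊆ S := by
      rintro w ⟨u, -, rfl⟩
      rw [← hran]; exact Set.mem_range_self u
    have heq : ⇑φ '' (⇑σ '' S) = S :=
      Set.eq_of_subset_of_ncard_le hsub hf (Set.toFinite S)
    have hcards : (⇑φ '' (⇑σ '' S)).ncard = (⇑σ '' S).ncard := by
      rw [heq, Set.ncard_image_of_injective _ σ.injective]
    exact Set.injOn_of_ncard_image_eq hcards (Set.toFinite _)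
  have hinj : Set.InjOn ⇑φ Sᶜ := stmt8_inj_compl X hvt S hhalf ⇑φ L2
  -- upper bound for the outside degree
  have hup : ∀ v ∉ S, (X.neighborSet v \ S).ncard ≤ d₁ := by
    intro v hv
    have hsubc : X.neighborSet v \ S ⊆ Sᶜ := fun w hw => hw.2
    have himg : ⇑φ '' (X.neighborSet v \ S) ⊆ X.neighborSet (φ v) ∩ S := by
      rintro w ⟨y, ⟨hyadj, _⟩, rfl⟩
      exact ⟨φ.map_adj hyadj, hφS y⟩
    calc (X.neighborSet v \ S).ncard
        = (⇑φ '' (X.neighborSet v \ S)).ncard :=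
          (Set.ncard_image_of_injOn (hinj.mono hsubc)).symm
      _ ≤ (X.neighborSet (φ v) ∩ S).ncard :=
          Set.ncard_le_ncard himg (Set.toFinite _)
      _ = d₁ := hd₁' (φ v) (hφS v)
  -- Finset versions
  set Sf : Finset V := S.toFinset with hSfdef
  have hSfcard : Sf.card = S.ncard := (Set.ncard_eq_toFinset_card' S).symm
  have hmemSf : ∀ v : V, v ∈ Sf ↔ v ∈ S := by intro v; simp [hSfdef]
  have hinterf : ∀ v : V, X.neighborSet v ∩ S = ↑(Sf.filter (fun w => X.Adj v w)) := by
    intro v; ext w; simp [hSfdef, and_comm]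
  have hdifff : ∀ v : V, X.neighborSet v \ S = ↑(Sfᶜ.filter (fun w => X.Adj v w)) := by
    intro v; ext w; simp [hSfdef, and_comm]
  -- double counting
  have hswap : ∑ v ∈ Sfᶜ, (Sf.filter (fun w => X.Adj v w)).card
      = ∑ u ∈ Sf, (Sfᶜ.filter (fun w => X.Adj u w)).card := by
    simp only [Finset.card_filter]
    rw [Finset.sum_comm]
    refine Finset.sum_congr rfl fun u _ => Finset.sum_congr rfl fun v _ => ?_
    simp [X.adj_comm]
  have hsum1 : ∑ u ∈ Sf, (Sfᶜ.filter (fun w => X.Adj u w)).card = Sf.card * (d - d₁) := by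
    rw [Finset.sum_congr rfl fun u hu => ?_, Finset.sum_const, smul_eq_mul]
    rw [← Set.ncard_coe_finset, ← hdifff u]
    exact hdegS u ((hmemSf u).mp hu)
  have hcardCf : Sfᶜ.card = Sf.card := by
    have := Finset.card_compl Sf
    rw [hSfcard] at *
    omega
  have hcsum : ∑ v ∈ Sfᶜ, (X.neighborSet v ∩ S).ncard = ∑ v ∈ Sfᶜ, (d - d₁) := by
    rw [Finset.sum_congr rfl fun v _ => by rw [hinterf v, Set.ncard_coe_finset]]
    rw [hswap, hsum1, Finset.sum_const, smul_eq_mul, hcardCf]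
  have hle : ∀ v ∈ Sfᶜ, d - d₁ ≤ (X.neighborSet v ∩ S).ncard := by
    intro v hv
    have hvS : v ∉ S := by simpa [hmemSf] using hv
    have h1 := Set.ncard_inter_add_ncard_diff_eq_ncard (X.neighborSet v) S (Set.toFinite _)
    have h2 := hup v hvS
    rw [hd v] at h1
    omega
  have hc : ∀ v ∉ S, (X.neighborSet v ∩ S).ncard = d - d₁ := by
    intro v hv
    have hvC : v ∈ Sfᶜ := by simpa [hmemSf] using hv
    have := (Finset.sum_eq_sum_iff_of_le hle).mp hcsum.symm
    exact ((this v hvC)).symm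
  have hNdiff : ∀ v ∉ S, (X.neighborSet v \ S).ncard = d₁ := by
    intro v hv
    have h1 := Set.ncard_inter_add_ncard_diff_eq_ncard (X.neighborSet v) S (Set.toFinite _)
    rw [hd v, hc v hv] at h1
    omega
  -- the image identity for part B
  have himgeq : ∀ v ∉ S, ⇑φ '' (X.neighborSet v \ S) = X.neighborSet (φ v) ∩ S := by
    intro v hv
    have hsubc : X.neighborSet v \ S ⊆ Sᶜ := fun w hw => hw.2
    have himg : ⇑φ '' (X.neighborSet v \ S) ⊆ X.neighborSet (φ v) ∩ S := by
      rintro w ⟨y, ⟨hyadj, _⟩, rfl⟩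
      exact ⟨φ.map_adj hyadj, hφS y⟩
    refine Set.eq_of_subset_of_ncard_le himg ?_ (Set.toFinite _)
    rw [Set.ncard_image_of_injOn (hinj.mono hsubc), hNdiff v hv, hd₁' (φ v) (hφS v)]
  -- part B helper
  have hB : ∀ x ∉ S, ∀ w ∈ S, X.Adj x w → ∃ y, y ∉ S ∧ X.Adj x y ∧ φ y = w := by
    intro x hx w hw hadj
    have hwmem : w ∈ X.neighborSet (φ x) ∩ S := by
      refine ⟨?_, hw⟩
      have := φ.map_adj hadj
      rwa [hid w hw] at this
    rw [← himgeq x hx] at hwmem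
    obtain ⟨y, ⟨hyadj, hyS⟩, hyw⟩ := hwmem
    exact ⟨y, hyS, hyadj, hyw⟩
  -- neighbor sets of the cross graph
  have hcrossS : ∀ v ∈ S, (crossGraph X S).neighborSet v = X.neighborSet v \ S := by
    intro v hv
    ext w
    simp only [SimpleGraph.mem_neighborSet, Set.mem_diff]
    constructor
    · rintro ⟨hadj, ⟨-, hw⟩ | ⟨hv', -⟩⟩
      · exact ⟨hadj, hw⟩
      · exact absurd hv hv'
    · rintro ⟨hadj, hw⟩
      exact ⟨hadj, Or.inl ⟨hv, hw⟩⟩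
  have hcrossC : ∀ v ∉ S, (crossGraph X S).neighborSet v = X.neighborSet v ∩ S := by
    intro v hv
    ext w
    simp only [SimpleGraph.mem_neighborSet, Set.mem_inter_iff]
    constructor
    · rintro ⟨hadj, ⟨hv', -⟩ | ⟨-, hw⟩⟩
      · exact absurd hv' hv
      · exact ⟨hadj, hw⟩
    · rintro ⟨hadj, hw⟩
      exact ⟨hadj, Or.inr ⟨hv, hw⟩⟩
  constructor
  · intro v
    by_cases hv : v ∈ S
    · rw [hcrossS v hv]; exact hdegS v hv
    · rw [hcrossC v hv]; exact hc v hv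
  · rintro u v ⟨hadj, ⟨huS, hvS⟩ | ⟨huS, hvS⟩⟩
    · obtain ⟨y, hyS, hyadj, hyw⟩ := hB v hvS u huS hadj.symm
      exact ⟨v, y, hvS, hyS, hyadj, by rw [hyw, Sym2.eq_swap]⟩
    · obtain ⟨y, hyS, hyadj, hyw⟩ := hB u huS v hvS hadj
      exact ⟨u, y, huS, hyS, hyadj, by rw [hyw]⟩
end

section
/- Let X be a vertex transitive graph with a core X₁ such that |V(X₁)| = ½|V(X)|, and let X₂ be the subgraph of X induced by V(X) ∖ V(X₁). Then {V(X₁), V(X₂)} is an equitable partition of X with quotient matrix [[d₁, d − d₁], [d − d₁, d₁]], where d is the common degree of vertices of X and d₁ is the common degree of vertices of X₁. -/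
open SimpleGraph

section Counting
open Finset
variable {V : Type*} [Fintype V] {X : SimpleGraph V}
attribute [local instance] Classical.propDecidable

noncomputable def Gam (X : SimpleGraph V) : Finset (V ≃ V) :=
  Finset.univ.filter fun e => ∀ a b, X.Adj (e a) (e b) ↔ X.Adj a b

lemma iso_mem_Gam (σ : X ≃g X) : σ.toEquiv ∈ Gam X := by
  simp only [Gam, mem_filter, mem_univ, true_and]
  exact fun a b => σ.map_adj_iff

noncomputable def kn (X : SimpleGraph V) (y z : V) : ℕ :=
  ((Gam X).filter fun e => e y = z).card

lemma kn_pos (hvt : VertexTransitive X) (y z : V) : 0 < kn X y z := by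
  obtain ⟨σ, hσ⟩ := hvt y z
  refine Finset.card_pos.mpr ⟨σ.toEquiv, ?_⟩
  simp only [mem_filter]
  exact ⟨iso_mem_Gam σ, hσ⟩

lemma kn_const (hvt : VertexTransitive X) (y z y' z' : V) :
    kn X y z = kn X y' z' := by
  obtain ⟨ρ, hρ⟩ := hvt y' y
  obtain ⟨τ, hτ⟩ := hvt z z'
  unfold kn
  refine Finset.card_bij' (fun e _ => (ρ.toEquiv.trans e).trans τ.toEquiv)
    (fun e _ => (ρ.symm.toEquiv.trans e).trans τ.symm.toEquiv) ?_ ?_ ?_ ?_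
  · intro e he
    simp only [Gam, mem_filter, mem_univ, true_and, Equiv.trans_apply] at he ⊢
    obtain ⟨heP, hey⟩ := he
    constructor
    · intro a b
      exact Iff.trans τ.map_adj_iff (Iff.trans (heP _ _) ρ.map_adj_iff)
    · show τ (e (ρ y')) = z'
      rw [hρ, hey, hτ]
  · intro e he
    simp only [Gam, mem_filter, mem_univ, true_and, Equiv.trans_apply] at he ⊢
    obtain ⟨heP, hey⟩ := he
    constructor
    · intro a b
      exact Iff.trans τ.symm.map_adj_iff (Iff.trans (heP _ _) ρ.symm.map_adj_iff)
    · show τ.symm (e (ρ.symm y)) = z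
      have h1 : ρ.symm y = y' := by
        rw [← hρ]; exact ρ.toEquiv.symm_apply_apply y'
      rw [h1, hey, ← hτ]
      exact τ.toEquiv.symm_apply_apply z
  · intro e he
    ext x
    simp [Equiv.trans_apply]
  · intro e he
    ext x
    simp [Equiv.trans_apply]

lemma core_inj_s9 {S : Set V} (hS : IsCoreSet X S) (F : X →g X.induce S) (σ : X ≃g X) :
    Function.Injective (fun y : S => F (σ (y : V))) := by
  classical
  set e : S → S := fun y => F (σ (y : V)) with he
  set T : Set V := Subtype.val '' Set.range e with hT
  have hmem : ∀ x : V, (↑(e (F x)) : V) ∈ T := fun x => ⟨e (F x), ⟨F x, rfl⟩, rfl⟩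
  have hhom : Nonempty (X →g X.induce T) := by
    refine ⟨⟨fun x => ⟨(e (F x) : V), hmem x⟩, ?_⟩⟩
    intro a b hab
    have h1 : X.Adj ↑(F a) ↑(F b) := F.map_adj hab
    have h2 : X.Adj (σ ↑(F a)) (σ ↑(F b)) := σ.map_adj_iff.mpr h1
    have h3 : (X.induce S).Adj (e (F a)) (e (F b)) := F.map_adj h2
    exact h3
  have h1 : S.ncard ≤ T.ncard := hS.2 T hhom
  have h2 : T.ncard = (Set.range e).ncard :=
    Set.ncard_image_of_injective _ Subtype.val_injective
  haveI : Finite ↥S := Finite.Set.subset _ (subset_refl S)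
  have h3 : (Set.range e).ncard ≤ (Set.univ : Set S).ncard := by
    apply Set.ncard_le_ncard (Set.subset_univ _)
  have h4 : (Set.univ : Set S).ncard = S.ncard := by
    rw [Set.ncard_univ, Nat.card_coe_set_eq]
  have h5 : Set.range e = Set.univ := by
    refine Set.eq_of_subset_of_ncard_le (Set.subset_univ _) ?_
    omega
  have hsurj : Function.Surjective e := Set.range_eq_univ.mp h5
  exact Finite.injective_iff_surjective.mpr hsurj

lemma fiber_two (hvt : VertexTransitive X) {S : Set V} (hS : IsCoreSet X S)
    (hhalf : 2 * S.ncard = Fintype.card V) (F : X →g X.induce S) (x : ↥S) :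
    (Finset.univ.filter fun z : V => F z = x).card = 2 := by
  classical
  haveI : Finite ↥S := Finite.Set.subset _ (subset_refl S)
  haveI : Fintype ↥S := Fintype.ofFinite _
  set Sf : Finset V := S.toFinset with hSf
  -- single-fibre intersection count
  have count1 : ∀ x' : ↥S, ∀ e ∈ Gam X,
      ((Finset.univ.filter fun z : V => F z = x').filter fun z => e.symm z ∈ S).card = 1 := by
    intro x' e he
    simp only [Gam, mem_filter, mem_univ, true_and] at he
    set σ : X ≃g X := ⟨e, he _ _⟩ with hσ
    have hinj : Function.Injective (fun y : S => F (σ (y : V))) := core_inj_s9 hS F σ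
    have hbij := (Finite.injective_iff_bijective).mp hinj
    obtain ⟨y, hy⟩ := hbij.surjective x'
    rw [Finset.card_eq_one]
    refine ⟨e ↑y, ?_⟩
    ext z
    simp only [mem_filter, mem_univ, true_and, Finset.mem_singleton]
    constructor
    · rintro ⟨hz1, hz2⟩
      have : F (σ ((⟨e.symm z, hz2⟩ : S) : V)) = x' := by
        show F (e (e.symm z)) = x'
        rw [e.apply_symm_apply]; exact hz1
      have heq : (⟨e.symm z, hz2⟩ : S) = y := hinj (this.trans hy.symm)
      have : e.symm z = (y : V) := congrArg Subtype.val heq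
      rw [← this, e.apply_symm_apply]
    · rintro rfl
      refine ⟨hy, ?_⟩
      rw [e.symm_apply_apply]
      exact y.2
  -- fixed z count
  have count2 : ∀ z : V, ((Gam X).filter fun e => e.symm z ∈ S).card
      = Sf.card * kn X x.val x.val := by
    intro z
    have hpart : ((Gam X).filter fun e => e.symm z ∈ S).card
        = ∑ y ∈ Sf, (((Gam X).filter fun e => e.symm z ∈ S).filter
            fun e => e.symm z = y).card := by
      refine Finset.card_eq_sum_card_fiberwise ?_
      intro e heg
      simp only [Finset.mem_coe, mem_filter] at heg ⊢
      simp only [hSf, Set.mem_toFinset] at heg ⊢; exact heg.2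
    rw [hpart]
    have : ∀ y ∈ Sf, (((Gam X).filter fun e => e.symm z ∈ S).filter
        fun e => e.symm z = y).card = kn X y z := by
      intro y hy
      congr 1
      ext e
      simp only [mem_filter, Finset.filter_filter, kn]
      constructor
      · rintro ⟨he, -, h3⟩
        exact ⟨he, by rw [Equiv.symm_apply_eq] at h3; exact h3.symm⟩
      · rintro ⟨he, h2⟩
        have h3 : e.symm z = y := by rw [Equiv.symm_apply_eq]; exact h2.symm
        exact ⟨he, by rw [h3]; simpa [hSf, Set.mem_toFinset] using hy, h3⟩
    rw [Finset.sum_congr rfl this]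
    rw [Finset.sum_congr rfl (fun y _ => kn_const hvt y z x.val x.val)]
    rw [Finset.sum_const, smul_eq_mul]
  -- the double count
  have main : ∀ x' : ↥S, (Gam X).card =
      (Finset.univ.filter fun z : V => F z = x').card * (Sf.card * kn X x.val x.val) := by
    intro x'
    have lhs : ∑ e ∈ Gam X, ((Finset.univ.filter fun z : V => F z = x').filter
        fun z => e.symm z ∈ S).card = (Gam X).card := by
      rw [Finset.sum_congr rfl (count1 x'), Finset.sum_const, smul_eq_mul, mul_one]
    have swap : ∑ e ∈ Gam X, ((Finset.univ.filter fun z : V => F z = x').filter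
        fun z => e.symm z ∈ S).card
        = ∑ z ∈ (Finset.univ.filter fun z : V => F z = x'),
            ((Gam X).filter fun e => e.symm z ∈ S).card := by
      simp only [Finset.card_filter]
      exact Finset.sum_comm
    rw [← lhs, swap, Finset.sum_congr rfl (fun z _ => count2 z), Finset.sum_const,
      smul_eq_mul]
  -- positivity
  have hSne : x.val ∈ Sf := by simpa [hSf, Set.mem_toFinset] using x.2
  have hSpos : 0 < Sf.card := Finset.card_pos.mpr ⟨x.val, hSne⟩
  have hkpos : 0 < kn X x.val x.val := kn_pos hvt _ _
  have hconst : ∀ x' : ↥S, (Finset.univ.filter fun z : V => F z = x').card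
      = (Finset.univ.filter fun z : V => F z = x).card := by
    intro x'
    have := (main x').symm.trans (main x)
    exact Nat.eq_of_mul_eq_mul_right (Nat.mul_pos hSpos hkpos) this
  -- partition
  have hpartV : (Finset.univ : Finset V).card
      = ∑ x' ∈ (Finset.univ : Finset ↥S), (Finset.univ.filter fun z : V => F z = x').card :=
    Finset.card_eq_sum_card_fiberwise (fun z _ => Finset.mem_univ _)
  rw [Finset.sum_congr rfl (fun x' _ => hconst x'), Finset.sum_const, smul_eq_mul] at hpartV
  have hcardS : (Finset.univ : Finset ↥S).card = S.ncard := by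
    rw [Finset.card_univ, ← Nat.card_coe_set_eq, Nat.card_eq_fintype_card]
  rw [Finset.card_univ, hcardS] at hpartV
  have h2s : 2 * S.ncard = S.ncard * (Finset.univ.filter fun z : V => F z = x).card := by
    rw [hhalf, hpartV]
  have : S.ncard * 2 = S.ncard * (Finset.univ.filter fun z : V => F z = x).card := by
    omega
  have hs0 : 0 < S.ncard := by
    rw [← hcardS] at *
    have : 0 < (Finset.univ : Finset ↥S).card := Finset.card_pos.mpr ⟨x, Finset.mem_univ x⟩
    omega
  exact (Nat.eq_of_mul_eq_mul_left hs0 this).symm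

lemma injOn_compl (hvt : VertexTransitive X) {S : Set V} (hS : IsCoreSet X S)
    (hhalf : 2 * S.ncard = Fintype.card V) (F : X →g X.induce S) :
    Set.InjOn (fun z => F z) Sᶜ := by
  classical
  haveI : Finite ↥S := Finite.Set.subset _ (subset_refl S)
  intro a ha b hb hab
  by_contra hne
  set σ : X ≃g X := RelIso.refl X.Adj with hσ
  have hinj : Function.Injective (fun y : S => F (σ (y : V))) := core_inj_s9 hS F σ
  obtain ⟨y, hy⟩ := ((Finite.injective_iff_bijective).mp hinj).surjective (F a)
  have hy' : F (y : V) = F a := hy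
  have hsub : ({a, b, (y : V)} : Finset V) ⊆ Finset.univ.filter fun z : V => F z = F a := by
    intro z hz
    simp only [Finset.mem_insert, Finset.mem_singleton] at hz
    simp only [Finset.mem_filter, Finset.mem_univ, true_and]
    rcases hz with rfl | rfl | rfl
    · rfl
    · exact hab.symm
    · exact hy'
  have hya : (y : V) ≠ a := fun h => ha (h ▸ y.2)
  have hyb : (y : V) ≠ b := fun h => hb (h ▸ y.2)
  have hcard3 : ({a, b, (y : V)} : Finset V).card = 3 := by
    rw [Finset.card_insert_of_notMem, Finset.card_insert_of_notMem, Finset.card_singleton]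
    · simp [hyb.symm]
    · simp [hne, hya.symm]
  have h2 := fiber_two hvt hS hhalf F (F a)
  have := Finset.card_le_card hsub
  omega

end Counting

/-- Let `X` be vertex transitive with a core `X₁` (induced on `S`) of half its size, and
`X₂` the subgraph induced on `Sᶜ`.  If `X` is regular of degree `d` and `X₁` is regular of
degree `d₁`, then `{V(X₁), V(X₂)}` is an equitable partition of `X` with quotient matrix
`[[d₁, d − d₁], [d − d₁, d₁]]`: every vertex of `S` has `d₁` neighbours in `S` and
`d − d₁` neighbours in `Sᶜ`, and every vertex of `Sᶜ` has `d − d₁` neighbours in `S` and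
`d₁` neighbours in `Sᶜ`. -/
theorem stmt_9 {V : Type*} [Fintype V] (X : SimpleGraph V)
    (hvt : VertexTransitive X) (S : Set V) (hS : IsCoreSet X S)
    (hhalf : 2 * S.ncard = Fintype.card V)
    (d d₁ : ℕ) (hd : ∀ v : V, (X.neighborSet v).ncard = d)
    (hd₁ : ∀ v : ↥S, ((X.induce S).neighborSet v).ncard = d₁) :
    (∀ v ∈ S, (X.neighborSet v ∩ S).ncard = d₁ ∧
              (X.neighborSet v ∩ Sᶜ).ncard = d - d₁) ∧
    (∀ v ∈ Sᶜ, (X.neighborSet v ∩ S).ncard = d - d₁ ∧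
               (X.neighborSet v ∩ Sᶜ).ncard = d₁) := by
  classical
  -- neighbour count inside S, for v ∈ S
  have partA : ∀ v (hv : v ∈ S), (X.neighborSet v ∩ S).ncard = d₁ := by
    intro v hv
    have himg : X.neighborSet v ∩ S
        = Subtype.val '' ((X.induce S).neighborSet ⟨v, hv⟩) := by
      ext u
      simp only [Set.mem_inter_iff, mem_neighborSet, Set.mem_image]
      constructor
      · rintro ⟨hadj, hu⟩
        exact ⟨⟨u, hu⟩, hadj, rfl⟩
      · rintro ⟨⟨u', hu'⟩, hadj, rfl⟩
        exact ⟨hadj, hu'⟩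
    rw [himg, Set.ncard_image_of_injective _ Subtype.val_injective, hd₁]
  -- degree split
  have split : ∀ v : V, (X.neighborSet v ∩ S).ncard + (X.neighborSet v ∩ Sᶜ).ncard = d := by
    intro v
    have hdisj : Disjoint (X.neighborSet v ∩ S) (X.neighborSet v ∩ Sᶜ) :=
      Set.disjoint_left.mpr (fun u hu hu2 => hu2.2 hu.2)
    have hun : (X.neighborSet v ∩ S) ∪ (X.neighborSet v ∩ Sᶜ) = X.neighborSet v := by
      rw [← Set.inter_union_distrib_left, Set.union_compl_self, Set.inter_univ]
    rw [← Set.ncard_union_eq hdisj (Set.toFinite _) (Set.toFinite _), hun, hd]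
  constructor
  · intro v hv
    have h1 := partA v hv
    have h2 := split v
    exact ⟨h1, by omega⟩
  · intro v hv
    -- S is nonempty, giving d₁ ≤ d
    have hcardpos : 0 < Fintype.card V := Fintype.card_pos_iff.mpr ⟨v⟩
    have hSpos : 0 < S.ncard := by omega
    obtain ⟨u₀, hu₀⟩ := Set.nonempty_of_ncard_ne_zero (by omega : S.ncard ≠ 0)
    have hd₁d : d₁ ≤ d := by
      have := partA u₀ hu₀
      have := split u₀
      omega
    obtain ⟨F⟩ := hS.1
    have hinjC := injOn_compl hvt hS hhalf F
    -- upper bound on neighbours inside Sᶜ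
    have hb : ∀ w, w ∈ Sᶜ → (X.neighborSet w ∩ Sᶜ).ncard ≤ d₁ := by
      intro w hw
      have himg : (fun z => F z) '' (X.neighborSet w ∩ Sᶜ)
          ⊆ (X.induce S).neighborSet (F w) := by
        rintro x ⟨u, ⟨hadj, hu⟩, rfl⟩
        exact F.map_adj hadj
      have hinj' : Set.InjOn (fun z => F z) (X.neighborSet w ∩ Sᶜ) :=
        hinjC.mono Set.inter_subset_right
      calc (X.neighborSet w ∩ Sᶜ).ncard
          = ((fun z => F z) '' (X.neighborSet w ∩ Sᶜ)).ncard :=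
            (Set.ncard_image_of_injOn hinj').symm
        _ ≤ ((X.induce S).neighborSet (F w)).ncard :=
            Set.ncard_le_ncard himg (Set.toFinite _)
        _ = d₁ := hd₁ _
    -- Finset bookkeeping
    set Sf : Finset V := S.toFinset with hSf
    set Cf : Finset V := Sᶜ.toFinset with hCf
    have conv : ∀ (w : V) (A : Set V) (inst : Fintype ↥A),
        (X.neighborSet w ∩ A).ncard = (A.toFinset.filter fun u => X.Adj w u).card := by
      intro w A inst
      have : X.neighborSet w ∩ A = ↑(A.toFinset.filter fun u => X.Adj w u) := by
        ext u
        simp [Set.mem_toFinset, and_comm]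
      rw [this, Set.ncard_coe_finset]
    have hSfcard : Sf.card = S.ncard := (Set.ncard_eq_toFinset_card' S).symm
    have hCfcard : Cf.card = Sf.card := by
      have h1 : Sf.card + Cf.card = Fintype.card V := by
        rw [hSf, hCf]
        rw [Set.toFinset_compl]
        rw [Finset.card_compl]
        have : S.toFinset.card ≤ Fintype.card V := Finset.card_le_univ _
        omega
      omega
    -- double counting of edges between S and Sᶜ
    have dc : ∑ u ∈ Sf, (Cf.filter fun w => X.Adj u w).card
        = ∑ w ∈ Cf, (Sf.filter fun u => X.Adj w u).card := by
      simp only [Finset.card_filter]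
      rw [Finset.sum_comm]
      exact Finset.sum_congr rfl fun w _ => Finset.sum_congr rfl fun u _ => by
        rw [SimpleGraph.adj_comm]
    have lhs_val : ∑ u ∈ Sf, (Cf.filter fun w => X.Adj u w).card = Sf.card * (d - d₁) := by
      rw [Finset.sum_congr rfl (fun u hu => ?_), Finset.sum_const, smul_eq_mul]
      have huS : u ∈ S := by rwa [hSf, Set.mem_toFinset] at hu
      have h1 := partA u huS
      have h2 := split u
      rw [← conv u Sᶜ _]
      omega
    have hge : ∀ w ∈ Cf, d - d₁ ≤ (Sf.filter fun u => X.Adj w u).card := by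
      intro w hw
      have hwC : w ∈ Sᶜ := by rwa [hCf, Set.mem_toFinset] at hw
      have h1 := hb w hwC
      have h2 := split w
      rw [← conv w S _]
      omega
    have hvC : v ∈ Cf := by rw [hCf, Set.mem_toFinset]; exact hv
    have hveq : (Sf.filter fun u => X.Adj v u).card = d - d₁ := by
      by_contra hlt
      have hvgt : d - d₁ < (Sf.filter fun u => X.Adj v u).card := by
        have := hge v hvC
        omega
      have hsum : ∑ w ∈ Cf, (d - d₁) < ∑ w ∈ Cf, (Sf.filter fun u => X.Adj w u).card :=
        Finset.sum_lt_sum hge ⟨v, hvC, hvgt⟩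
      rw [Finset.sum_const, smul_eq_mul, hCfcard] at hsum
      omega
    have haS : (X.neighborSet v ∩ S).ncard = d - d₁ := by
      rw [conv v S _]
      exact hveq
    refine ⟨haS, ?_⟩
    have := split v
    omega
end

section
/- For every n ≥ 1, the line graph L(K_{2n}) of the complete graph on 2n vertices and the complete graph K_{2n−1} are homomorphically equivalent; consequently the core of L(K_{2n}) is K_{2n−1}. -/
open SimpleGraph

section aux

variable (k : ℕ)

/-- vertex label in `ZMod k`. -/
private def hcol (a : Fin (k + 1)) : ZMod k := (a.val : ZMod k)

/-- symmetric edge colouring function. -/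
private def gcol (a b : Fin (k + 1)) : ZMod k :=
  if a = Fin.last k then 2 * hcol k b
  else if b = Fin.last k then 2 * hcol k a
  else hcol k a + hcol k b

private lemma gcol_symm (a b : Fin (k + 1)) : gcol k a b = gcol k b a := by
  unfold gcol
  by_cases ha : a = Fin.last k <;> by_cases hb : b = Fin.last k <;>
    simp [ha, hb, add_comm]

/-- colouring of edges. -/
private noncomputable def ccol : Sym2 (Fin (k + 1)) → ZMod k :=
  Sym2.lift ⟨gcol k, gcol_symm k⟩

private lemma ccol_mk (a b : Fin (k + 1)) : ccol k s(a, b) = gcol k a b :=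
  Sym2.lift_mk _ _ _

variable {k}

private lemma hcol_inj [NeZero k] {a b : Fin (k + 1)} (ha : a ≠ Fin.last k)
    (hb : b ≠ Fin.last k) (h : hcol k a = hcol k b) : a = b := by
  have ha' : a.val < k := by
    have := a.isLt
    rcases lt_or_eq_of_le (Nat.lt_succ_iff.mp this) with h' | h'
    · exact h'
    · exact absurd (Fin.ext h' : a = Fin.last k) ha
  have hb' : b.val < k := by
    have := b.isLt
    rcases lt_or_eq_of_le (Nat.lt_succ_iff.mp this) with h' | h'
    · exact h'
    · exact absurd (Fin.ext h' : b = Fin.last k) hb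
  have := congrArg ZMod.val h
  rw [hcol, hcol, ZMod.val_cast_of_lt ha', ZMod.val_cast_of_lt hb'] at this
  exact Fin.ext this

private lemma two_cancel (hk : Odd k) {a b : ZMod k} (h : 2 * a = 2 * b) : a = b := by
  have hcop : Nat.Coprime 2 k := Nat.coprime_two_left.mpr hk
  have hu : IsUnit (2 : ZMod k) := by
    have := (ZMod.isUnit_iff_coprime 2 k).mpr hcop
    simpa using this
  exact hu.mul_left_cancel h

private lemma ccol_proper (hk : Odd k) {x y z : Fin (k + 1)} (hxy : x ≠ y)
    (hxz : x ≠ z) (hyz : y ≠ z) : ccol k s(x, y) ≠ ccol k s(x, z) := by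
  haveI : NeZero k := ⟨hk.pos.ne'⟩
  rw [ccol_mk, ccol_mk]
  unfold gcol
  by_cases hx : x = Fin.last k
  · have hy : y ≠ Fin.last k := fun h => hxy (hx.trans h.symm)
    have hz : z ≠ Fin.last k := fun h => hxz (hx.trans h.symm)
    simp only [if_pos hx]
    intro h
    exact hyz (hcol_inj hy hz (two_cancel hk h))
  · simp only [if_neg hx]
    by_cases hy : y = Fin.last k
    · have hz : z ≠ Fin.last k := fun h => hyz (hy.trans h.symm)
      simp only [if_pos hy, if_neg hz]
      intro h
      -- 2 * hcol x = hcol x + hcol z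
      have : hcol k x = hcol k z := by
        have := h
        rw [two_mul] at this
        exact add_left_cancel this
      exact hxz (hcol_inj hx hz this)
    · simp only [if_neg hy]
      by_cases hz : z = Fin.last k
      · simp only [if_pos hz]
        intro h
        have : hcol k y = hcol k x := by
          rw [two_mul] at h
          exact add_left_cancel h
        exact hxy (hcol_inj hx hy this.symm)
      · simp only [if_neg hz]
        intro h
        exact hyz (hcol_inj hy hz (add_left_cancel h))

/-- `ZMod k` to `Fin k`. -/
private noncomputable def zmodToFin [NeZero k] (x : ZMod k) : Fin k :=
  ⟨x.val, ZMod.val_lt x⟩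

private lemma zmodToFin_inj [NeZero k] : Function.Injective (zmodToFin (k := k)) := by
  intro a b h
  have : a.val = b.val := congrArg Fin.val h
  exact ZMod.val_injective k this

end aux

section homs

variable {k : ℕ}

/-- the colouring homomorphism `L(K_{k+1}) → K_k`. -/
private noncomputable def homLtoK (hk : Odd k) :
    (⊤ : SimpleGraph (Fin (k + 1))).lineGraph →g (⊤ : SimpleGraph (Fin k)) := by
  haveI : NeZero k := ⟨hk.pos.ne'⟩
  refine ⟨fun e => zmodToFin (ccol k e.val), ?_⟩
  rintro e₁ e₂ hadj
  rw [SimpleGraph.lineGraph_adj_iff_exists] at hadj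
  obtain ⟨hne, v, hv1, hv2⟩ := hadj
  obtain ⟨y, hy⟩ := Sym2.mem_iff_exists.mp hv1
  obtain ⟨z, hz⟩ := Sym2.mem_iff_exists.mp hv2
  have hvy : v ≠ y := by
    intro h
    have := e₁.2
    rw [hy, ← h] at this
    exact (⊤ : SimpleGraph (Fin (k+1))).irrefl ((SimpleGraph.mem_edgeSet _).mp this)
  have hvz : v ≠ z := by
    intro h
    have := e₂.2
    rw [hz, ← h] at this
    exact (⊤ : SimpleGraph (Fin (k+1))).irrefl ((SimpleGraph.mem_edgeSet _).mp this)
  have hyz : y ≠ z := by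
    rintro rfl
    exact hne (Subtype.ext (hy.trans hz.symm))
  have hcc : ccol k e₁.val ≠ ccol k e₂.val := by
    rw [hy, hz]
    exact ccol_proper hk hvy hvz hyz
  simp only [top_adj]
  exact fun h => hcc (by
    have := zmodToFin_inj (by exact h)
    exact this)

/-- the clique homomorphism `K_k → L(K_{k+1})`. -/
private def homKtoL : (⊤ : SimpleGraph (Fin k)) →g
    (⊤ : SimpleGraph (Fin (k + 1))).lineGraph := by
  refine ⟨fun i => ⟨s(i.castSucc, Fin.last k), ?_⟩, ?_⟩
  · rw [SimpleGraph.mem_edgeSet, top_adj]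
    exact Fin.ne_of_lt (Fin.castSucc_lt_last i)
  · intro i j hij
    rw [top_adj] at hij
    rw [SimpleGraph.lineGraph_adj_iff_exists]
    constructor
    · intro h
      have := Subtype.ext_iff.mp h
      simp only [Sym2.eq, Sym2.rel_iff', Prod.mk.injEq, Prod.swap_prod_mk] at this
      rcases this with ⟨h1, _⟩ | ⟨h1, h2⟩
      · exact hij (Fin.castSucc_injective _ h1)
      · exact absurd h1 (Fin.ne_of_lt (Fin.castSucc_lt_last i))
    · exact ⟨Fin.last k, by simp, by simp⟩

end homs

/-- Any core set of a graph homomorphically equivalent to `K_k` induces `K_k`. -/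
private lemma core_complete {W : Type*} [Finite W] {X : SimpleGraph W} {k : ℕ}
    (φ₁ : X →g (⊤ : SimpleGraph (Fin k))) (φ₂ : (⊤ : SimpleGraph (Fin k)) →g X)
    {S : Set W} (hS : IsCoreSet X S) :
    Nonempty ((X.induce S) ≃g (⊤ : SimpleGraph (Fin k))) := by
  obtain ⟨⟨χ⟩, hmin⟩ := hS
  set θ : X →g X := φ₂.comp φ₁ with hθ
  have hT : Nonempty (X →g X.induce (Set.range θ)) :=
    ⟨⟨fun v => ⟨θ v, Set.mem_range_self v⟩, fun hab => θ.map_adj hab⟩⟩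
  have hub : S.ncard ≤ k := by
    refine le_trans (hmin _ hT) ?_
    have hsub : Set.range (θ : W → W) ⊆ Set.range (φ₂ : Fin k → W) := by
      rintro _ ⟨v, rfl⟩
      exact ⟨φ₁ v, rfl⟩
    calc (Set.range (θ : W → W)).ncard
        ≤ (Set.range (φ₂ : Fin k → W)).ncard :=
          Set.ncard_le_ncard hsub (Set.toFinite _)
      _ ≤ (Set.univ : Set (Fin k)).ncard := by
          rw [← Set.image_univ]
          exact Set.ncard_image_le (Set.toFinite _)
      _ = k := by rw [Set.ncard_univ]; simp
  set μ := χ.comp φ₂ with hμ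
  have hμinj : Function.Injective μ := by
    intro i j hij
    by_contra hne
    have hadj : (⊤ : SimpleGraph (Fin k)).Adj i j := by simpa using hne
    exact (X.induce S).irrefl (hij ▸ μ.map_adj hadj)
  have hRdef : True := trivial
  have hRS : Set.range (fun i => ((μ i : S) : W)) ⊆ S := by
    rintro _ ⟨i, rfl⟩; exact (μ i).2
  have hRcard : (Set.range (fun i => ((μ i : S) : W))).ncard = k := by
    have hinj : Function.Injective (fun i : Fin k => ((μ i : S) : W)) :=
      Subtype.val_injective.comp hμinj
    rw [← Nat.card_coe_set_eq, Nat.card_range_of_injective hinj]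
    simp
  have hlb : k ≤ S.ncard := hRcard ▸ Set.ncard_le_ncard hRS (Set.toFinite S)
  have hcard : S.ncard = k := le_antisymm hub hlb
  have hRSeq : Set.range (fun i => ((μ i : S) : W)) = S :=
    Set.eq_of_subset_of_ncard_le hRS (by rw [hRcard, hcard]) (Set.toFinite S)
  have hcomp : ∀ a b : S, a ≠ b → (X.induce S).Adj a b := by
    intro a b hab
    have ha : (a : W) ∈ Set.range (fun i => ((μ i : S) : W)) := by rw [hRSeq]; exact a.2
    have hb : (b : W) ∈ Set.range (fun i => ((μ i : S) : W)) := by rw [hRSeq]; exact b.2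
    obtain ⟨i, hi⟩ := ha
    obtain ⟨j, hj⟩ := hb
    have hij : i ≠ j := by
      rintro rfl
      exact hab (Subtype.ext (hi.symm.trans hj))
    have hadj : (⊤ : SimpleGraph (Fin k)).Adj i j := by simpa using hij
    have := μ.map_adj hadj
    have hia : μ i = a := Subtype.ext hi
    have hjb : μ j = b := Subtype.ext hj
    rwa [hia, hjb] at this
  haveI : Finite S := Set.toFinite S
  have hcardS : Nat.card S = k := by rw [Nat.card_coe_set_eq, hcard]
  let e := Finite.equivFinOfCardEq hcardS
  refine ⟨⟨e, ?_⟩⟩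
  intro a b
  simp only [top_adj]
  constructor
  · intro h
    exact hcomp a b (fun hab => h (by rw [hab]))
  · intro h
    intro heq
    exact h.ne (e.injective heq)

/-- For `n ≥ 1`, the line graph of `K_{2n}` and the complete graph `K_{2n−1}` are
homomorphically equivalent; consequently every core of `L(K_{2n})` is isomorphic to
`K_{2n−1}`. -/
theorem stmt_13 (n : ℕ) (hn : 1 ≤ n) :
    Nonempty ((⊤ : SimpleGraph (Fin (2 * n))).lineGraph →g
        (⊤ : SimpleGraph (Fin (2 * n - 1)))) ∧
    Nonempty ((⊤ : SimpleGraph (Fin (2 * n - 1))) →g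
        (⊤ : SimpleGraph (Fin (2 * n))).lineGraph) ∧
    ∀ S, IsCoreSet (⊤ : SimpleGraph (Fin (2 * n))).lineGraph S →
      Nonempty (((⊤ : SimpleGraph (Fin (2 * n))).lineGraph.induce S) ≃g
        (⊤ : SimpleGraph (Fin (2 * n - 1)))) := by
  obtain ⟨m, rfl⟩ : ∃ m, n = m + 1 := ⟨n - 1, by omega⟩
  have h1 : 2 * (m + 1) - 1 = 2 * m + 1 := by omega
  have h2 : 2 * (m + 1) = (2 * m + 1) + 1 := by omega
  rw [h1, h2]
  have hk : Odd (2 * m + 1) := ⟨m, by ring⟩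
  exact ⟨⟨homLtoK hk⟩, ⟨homKtoL⟩, fun S hS => core_complete (homLtoK hk) homKtoL hS⟩
end

section
/- For n ≥ 3, the vertex set of the line graph L(K_{2n}) cannot be partitioned into sets each of which induces a subgraph isomorphic to K_{2n−1}; in particular, since the core of L(K_{2n}) is K_{2n−1}, the vertex set of the vertex transitive graph L(K_{2n}) cannot be partitioned into copies of its core, even though the core has size |V(L(K_{2n}))|/n. -/
open SimpleGraph

/-- A pairwise-intersecting family of non-diagonal `Sym2`s with at least 4 members
has a common point. -/
lemma common_point {V : Type*} {T : Set (Sym2 V)} (hfin : T.Finite)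
    (hnd : ∀ e ∈ T, ¬ e.IsDiag)
    (hint : ∀ e ∈ T, ∀ f ∈ T, e ≠ f → ∃ v, v ∈ e ∧ v ∈ f)
    (hcard : 4 ≤ T.ncard) :
    ∃ v, ∀ e ∈ T, v ∈ e := by
  have hne : T.Nonempty := by
    rw [← Set.ncard_pos hfin] at *; omega
  obtain ⟨e1, he1⟩ := hne
  -- write e1 = s(a, b)
  obtain ⟨a, b, hab⟩ : ∃ a b, e1 = s(a, b) := by
    induction e1 using Sym2.ind with
    | _ x y => exact ⟨x, y, rfl⟩
  have hanb : a ≠ b := by rintro rfl; exact hnd e1 he1 (by simp [hab])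
  have ha1 : a ∈ e1 := by simp [hab]
  have hb1 : b ∈ e1 := by simp [hab]
  by_cases hA : ∀ e ∈ T, a ∈ e
  · exact ⟨a, hA⟩
  by_cases hB : ∀ e ∈ T, b ∈ e
  · exact ⟨b, hB⟩
  exfalso
  push_neg at hA hB
  obtain ⟨f, hfT, haf⟩ := hA
  obtain ⟨g, hgT, hbg⟩ := hB
  have hfe1 : f ≠ e1 := fun h => haf (h ▸ ha1)
  have hge1 : g ≠ e1 := fun h => hbg (h ▸ hb1)
  -- b ∈ f
  have hbf : b ∈ f := by
    obtain ⟨v, hv1, hv2⟩ := hint f hfT e1 he1 hfe1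
    rw [hab, Sym2.mem_iff] at hv2
    rcases hv2 with rfl | rfl
    · exact absurd hv1 haf
    · exact hv1
  -- a ∈ g
  have hag : a ∈ g := by
    obtain ⟨v, hv1, hv2⟩ := hint g hgT e1 he1 hge1
    rw [hab, Sym2.mem_iff] at hv2
    rcases hv2 with rfl | rfl
    · exact hv1
    · exact absurd hv1 hbg
  set c := Sym2.Mem.other hbf with hc
  have hfc : f = s(b, c) := (Sym2.other_spec hbf).symm
  have hcb : c ≠ b := Sym2.other_ne (hnd f hfT) hbf
  have hca : c ≠ a := by rintro rfl; exact haf (by simp [hfc])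
  set d := Sym2.Mem.other hag with hd
  have hgd : g = s(a, d) := (Sym2.other_spec hag).symm
  have hda : d ≠ a := Sym2.other_ne (hnd g hgT) hag
  -- f ≠ g and their common point forces d = c
  have hfg : f ≠ g := fun h => haf (h ▸ hag)
  have hdc : d = c := by
    obtain ⟨v, hvf, hvg⟩ := hint f hfT g hgT hfg
    rw [hfc, Sym2.mem_iff] at hvf
    rw [hgd, Sym2.mem_iff] at hvg
    rcases hvg with rfl | rfl
    · rcases hvf with h | h
      · exact absurd h hanb
      · exact absurd h.symm hca
    · rcases hvf with h | h
      · exact absurd (h ▸ (show d ∈ g by rw [hgd]; simp)) hbg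
      · exact h
  rw [hdc] at hgd
  -- every member of T is one of the three triangle edges
  have hsub : T ⊆ {s(a, b), s(a, c), s(b, c)} := by
    intro h hT
    rcases eq_or_ne h e1 with rfl | hhe1
    · left; exact hab
    have hmem : a ∈ h ∨ b ∈ h := by
      obtain ⟨v, hv1, hv2⟩ := hint h hT e1 he1 hhe1
      rw [hab, Sym2.mem_iff] at hv2
      rcases hv2 with rfl | rfl
      · exact Or.inl hv1
      · exact Or.inr hv1
    rcases hmem with hah | hbh
    · by_cases hbh : b ∈ h
      · exact absurd ((Sym2.mem_and_mem_iff hanb).mp ⟨hah, hbh⟩) (hab ▸ hhe1)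
      · -- h meets f = s(b,c), doesn't contain b, so contains c
        have hhf : h ≠ f := fun hh => hbh (hh ▸ hbf)
        obtain ⟨v, hv1, hv2⟩ := hint h hT f hfT hhf
        rw [hfc, Sym2.mem_iff] at hv2
        rcases hv2 with rfl | rfl
        · exact absurd hv1 hbh
        · right; left
          exact ((Sym2.mem_and_mem_iff hca.symm).mp ⟨hah, hv1⟩)
    · by_cases hah : a ∈ h
      · exact absurd ((Sym2.mem_and_mem_iff hanb).mp ⟨hah, hbh⟩) (hab ▸ hhe1)
      · have hhg : h ≠ g := fun hh => hah (hh ▸ hag)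
        obtain ⟨v, hv1, hv2⟩ := hint h hT g hgT hhg
        rw [hgd, Sym2.mem_iff] at hv2
        rcases hv2 with rfl | rfl
        · exact absurd hv1 hah
        · right; right
          exact ((Sym2.mem_and_mem_iff hcb.symm).mp ⟨hbh, hv1⟩)
  have : T.ncard ≤ 3 := by
    refine le_trans (Set.ncard_le_ncard hsub (Set.toFinite _)) ?_
    refine le_trans (Set.ncard_insert_le _ _) ?_
    have := Set.ncard_insert_le (s(a,c)) ({s(b,c)} : Set (Sym2 _))
    simp [Set.ncard_singleton] at this ⊢
    omega
  omega

/-- The "star" at a vertex: all edges containing it. -/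
def star' (m : ℕ) (v : Fin m) : Set ↥(⊤ : SimpleGraph (Fin m)).edgeSet :=
  {e | v ∈ (e : Sym2 (Fin m))}

noncomputable def starEquiv (m : ℕ) (v : Fin m) : {w : Fin m // w ≠ v} ≃ ↥(star' m v) := by
  refine Equiv.ofBijective
    (fun w => ⟨⟨s(v, w.1), by rw [mem_edgeSet, top_adj]; exact w.2.symm⟩, by
      show v ∈ s(v, w.1); simp⟩) ⟨?_, ?_⟩
  · rintro ⟨w1, h1⟩ ⟨w2, h2⟩ h
    simp only [Subtype.mk.injEq] at h
    exact Subtype.ext (Sym2.congr_right.mp h)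
  · rintro ⟨⟨e, he⟩, hv⟩
    have hd : ¬ e.IsDiag := (⊤ : SimpleGraph (Fin m)).not_isDiag_of_mem_edgeSet he
    have hv' : v ∈ e := hv
    exact ⟨⟨Sym2.Mem.other hv', Sym2.other_ne hd hv'⟩,
      Subtype.ext (Subtype.ext (Sym2.other_spec hv'))⟩

lemma star'_ncard (m : ℕ) (v : Fin m) : (star' m v).ncard = m - 1 := by
  rw [← Nat.card_coe_set_eq, ← Nat.card_congr (starEquiv m v),
    Nat.card_eq_fintype_card, Fintype.card_subtype_compl, Fintype.card_subtype_eq,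
    Fintype.card_fin]

/-- For `n ≥ 3`, the vertex set of the line graph `L(K_{2n})` (a vertex transitive graph
on `n(2n−1)` vertices whose core is `K_{2n−1}`) cannot be partitioned into sets each of
which induces a subgraph isomorphic to `K_{2n−1}`, even though `K_{2n−1}` has size
`|V(L(K_{2n}))|/n`. -/
theorem stmt_15 (n : ℕ) (hn : 3 ≤ n) :
    (¬ ∃ P : Set (Set ↥(⊤ : SimpleGraph (Fin (2 * n))).edgeSet),
      Setoid.IsPartition P ∧
        ∀ T ∈ P, Nonempty (((⊤ : SimpleGraph (Fin (2 * n))).lineGraph.induce T) ≃g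
          (⊤ : SimpleGraph (Fin (2 * n - 1))))) ∧
    Fintype.card ↥(⊤ : SimpleGraph (Fin (2 * n))).edgeSet = n * (2 * n - 1) := by
  constructor
  · rintro ⟨P, ⟨hPne, hPcov⟩, hT⟩
    -- Step 1: every part is a full star
    have hstar : ∀ T ∈ P, ∃ v, T = star' (2 * n) v := by
      intro T hTP
      obtain ⟨iso⟩ := hT T hTP
      have hcardT : T.ncard = 2 * n - 1 := by
        rw [← Nat.card_coe_set_eq, Nat.card_congr iso.toEquiv,
          Nat.card_eq_fintype_card, Fintype.card_fin]
      set S : Set (Sym2 (Fin (2 * n))) := Subtype.val '' T with hS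
      have hSncard : S.ncard = T.ncard := Set.ncard_image_of_injective _ Subtype.val_injective
      have hcp : ∃ v, ∀ e ∈ S, v ∈ e := by
        apply common_point (Set.toFinite S)
        · rintro e ⟨⟨e', he'⟩, _, rfl⟩
          exact (⊤ : SimpleGraph (Fin (2 * n))).not_isDiag_of_mem_edgeSet he'
        · rintro e ⟨⟨e', he'⟩, heT, rfl⟩ f ⟨⟨f', hf'⟩, hfT, rfl⟩ hef
          have hne : (⟨⟨e', he'⟩, heT⟩ : T) ≠ ⟨⟨f', hf'⟩, hfT⟩ := by
            simp only [ne_eq, Subtype.mk.injEq]; exact fun h => hef (by simp [h])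
          have hadj : ((⊤ : SimpleGraph (Fin (2 * n))).lineGraph.induce T).Adj
              ⟨⟨e', he'⟩, heT⟩ ⟨⟨f', hf'⟩, hfT⟩ := by
            rw [← iso.map_adj_iff, top_adj]
            exact fun h => hne (iso.toEquiv.injective h)
          have hadj' : (⊤ : SimpleGraph (Fin (2 * n))).lineGraph.Adj ⟨e', he'⟩ ⟨f', hf'⟩ := hadj
          rw [lineGraph_adj_iff_exists] at hadj'
          exact hadj'.2
        · rw [hSncard, hcardT]; omega
      obtain ⟨v, hv⟩ := hcp
      refine ⟨v, Set.eq_of_subset_of_ncard_le ?_ ?_ (Set.toFinite _)⟩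
      · intro e heT
        exact hv e.1 ⟨e, heT, rfl⟩
      · rw [star'_ncard, hcardT]
    -- Step 2: find two parts = stars with distinct centers, both containing the edge
    -- between the centers, contradicting disjointness.
    obtain ⟨a, b, hab⟩ := Fintype.exists_pair_of_one_lt_card
      (α := Fin (2 * n)) (by rw [Fintype.card_fin]; omega)
    have he0 : s(a, b) ∈ (⊤ : SimpleGraph (Fin (2 * n))).edgeSet := by
      rw [mem_edgeSet, top_adj]; exact hab
    obtain ⟨T0, ⟨hT0P, he0T0⟩, -⟩ := hPcov ⟨s(a, b), he0⟩
    obtain ⟨v, rfl⟩ := hstar T0 hT0P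
    obtain ⟨u, w, huw⟩ := Fintype.exists_pair_of_one_lt_card
      (α := {x : Fin (2 * n) // x ≠ v}) (by
        rw [Fintype.card_subtype_compl, Fintype.card_subtype_eq, Fintype.card_fin]; omega)
    have he1 : s(u.1, w.1) ∈ (⊤ : SimpleGraph (Fin (2 * n))).edgeSet := by
      rw [mem_edgeSet, top_adj]
      exact fun h => huw (Subtype.ext h)
    obtain ⟨T1, ⟨hT1P, he1T1⟩, -⟩ := hPcov ⟨s(u.1, w.1), he1⟩
    obtain ⟨x, rfl⟩ := hstar T1 hT1P
    have hxv : x ≠ v := by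
      have hx : x ∈ s(u.1, w.1) := he1T1
      rcases Sym2.mem_iff.mp hx with rfl | rfl
      · exact u.2
      · exact w.2
    have hf : s(v, x) ∈ (⊤ : SimpleGraph (Fin (2 * n))).edgeSet := by
      rw [mem_edgeSet, top_adj]; exact hxv.symm
    have hfv : (⟨s(v, x), hf⟩ : ↥(⊤ : SimpleGraph (Fin (2 * n))).edgeSet) ∈ star' (2 * n) v := by
      show v ∈ s(v, x); simp
    have hfx : (⟨s(v, x), hf⟩ : ↥(⊤ : SimpleGraph (Fin (2 * n))).edgeSet) ∈ star' (2 * n) x := by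
      show x ∈ s(v, x); simp
    have hne : star' (2 * n) v ≠ star' (2 * n) x := by
      obtain ⟨y, hy⟩ : ∃ y, y ∉ ({v, x} : Finset (Fin (2 * n))) := by
        by_contra h
        push_neg at h
        have h1 : (Finset.univ : Finset (Fin (2 * n))).card ≤ ({v, x} : Finset _).card :=
          Finset.card_le_card fun z _ => h z
        have h2 : ({v, x} : Finset (Fin (2 * n))).card ≤ 2 :=
          (Finset.card_insert_le _ _).trans (by simp)
        rw [Finset.card_univ, Fintype.card_fin] at h1
        omega
      simp only [Finset.mem_insert, Finset.mem_singleton, not_or] at hy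
      have hg : s(v, y) ∈ (⊤ : SimpleGraph (Fin (2 * n))).edgeSet := by
        rw [mem_edgeSet, top_adj]; exact fun h => hy.1 h.symm
      intro h
      have h1 : (⟨s(v, y), hg⟩ : ↥(⊤ : SimpleGraph (Fin (2 * n))).edgeSet)
          ∈ star' (2 * n) v := by show v ∈ s(v, y); simp
      rw [h] at h1
      have h2 : x ∈ s(v, y) := h1
      rcases Sym2.mem_iff.mp h2 with rfl | rfl
      · exact hxv rfl
      · exact hy.2 rfl
    obtain ⟨Tf, -, huniq⟩ := hPcov ⟨s(v, x), hf⟩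
    exact hne ((huniq _ ⟨hT0P, hfv⟩).trans (huniq _ ⟨hT1P, hfx⟩).symm)
  · rw [← Set.toFinset_card]
    have : (⊤ : SimpleGraph (Fin (2 * n))).edgeSet.toFinset
        = (⊤ : SimpleGraph (Fin (2 * n))).edgeFinset := rfl
    rw [this, card_edgeFinset_top_eq_card_choose_two, Fintype.card_fin,
      Nat.choose_two_right]
    have h : 2 * n * (2 * n - 1) = 2 * (n * (2 * n - 1)) := by ring
    rw [h, Nat.mul_div_cancel_left _ (by norm_num)]
end

section
/- Let X = X(G,C) be a Cayley graph and let φ be an endomorphism of X whose image is a core Y of X. Then for every vertex y of Y, the fibre φ⁻¹(y) has size exactly |V(X)|/|V(Y)|. -/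
open SimpleGraph

/-- Let `X = X(G, C)` be a Cayley graph and `φ` an endomorphism of `X` whose image is a
core `Y` of `X`.  Then for every vertex `y` of `Y`, the fibre `φ⁻¹(y)` has size exactly
`|V(X)| / |V(Y)|` (stated multiplicatively: `|φ⁻¹(y)| ⬝ |V(Y)| = |V(X)|`). -/
theorem stmt_17 {G : Type*} [Group G] [Fintype G] (C : Set G)
    (hC1 : (1 : G) ∉ C) (hCinv : ∀ c ∈ C, c⁻¹ ∈ C)
    (X : SimpleGraph G) (hX : ∀ g h : G, X.Adj g h ↔ g⁻¹ * h ∈ C)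
    (φ : X →g X) (hcore : IsCoreSet X (Set.range ⇑φ)) :
    ∀ y ∈ Set.range ⇑φ,
      (⇑φ ⁻¹' {y}).ncard * (Set.range ⇑φ).ncard = Fintype.card G := by
  classical
  intro y hy
  set Yf : Finset G := Finset.univ.image φ with hYf
  have hrange : (Set.range ⇑φ) = ↑Yf := by
    ext x; simp [hYf]
  have hncardY : (Set.range ⇑φ).ncard = Yf.card := by
    rw [hrange, Set.ncard_coe_finset]
  have hfib : (⇑φ ⁻¹' {y}).ncard = (Finset.univ.filter fun x => φ x = y).card := by
    have : (⇑φ ⁻¹' {y}) = ↑(Finset.univ.filter fun x => φ x = y) := by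
      ext x; simp
    rw [this, Set.ncard_coe_finset]
  -- key: for each g, z ↦ φ (g * z) is a bijection of Yf
  have key : ∀ g : G, Set.InjOn (fun z => φ (g * z)) (Set.range ⇑φ) ∧
      Yf.image (fun z => φ (g * z)) = Yf := by
    intro g
    set T : Set G := (fun z => φ (g * z)) '' (Set.range ⇑φ) with hT
    have hmem : ∀ x : G, φ (g * φ x) ∈ T := by
      intro x
      exact ⟨φ x, ⟨x, rfl⟩, rfl⟩
    have hhom : ∀ a b, X.Adj a b → X.Adj (φ (g * φ a)) (φ (g * φ b)) := by
      intro a b hab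
      apply φ.map_rel
      rw [hX]
      have h2 := φ.map_rel hab
      rw [hX] at h2
      have : (g * φ a)⁻¹ * (g * φ b) = (φ a)⁻¹ * (φ b) := by group
      rw [this]
      exact h2
    have hψ : Nonempty (X →g X.induce T) := by
      refine ⟨⟨fun x => ⟨φ (g * φ x), hmem x⟩, ?_⟩⟩
      intro a b hab
      exact hhom a b hab
    have hle := hcore.2 T hψ
    have hTcoe : T = ↑(Yf.image (fun z => φ (g * z))) := by
      rw [hT, hrange]
      ext x
      simp [Set.mem_image]
    have hle' : Yf.card ≤ (Yf.image (fun z => φ (g * z))).card := by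
      rw [hncardY, hTcoe, Set.ncard_coe_finset] at hle
      exact hle
    have heq : (Yf.image (fun z => φ (g * z))).card = Yf.card :=
      le_antisymm (Finset.card_image_le) hle'
    have hinj : Set.InjOn (fun z => φ (g * z)) ↑Yf :=
      Finset.card_image_iff.mp heq
    have hsub : Yf.image (fun z => φ (g * z)) ⊆ Yf := by
      intro x hx
      obtain ⟨z, _, rfl⟩ := Finset.mem_image.mp hx
      simp [hYf]
    refine ⟨by rw [hrange]; exact hinj, Finset.eq_of_subset_of_card_le hsub (by rw [heq])⟩
  have hyY : y ∈ Yf := by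
    rw [hrange] at hy; exact hy
  -- counting
  have count1 : ∀ z ∈ Yf, (Finset.univ.filter fun g : G => φ (g * z) = y).card
      = (Finset.univ.filter fun x => φ x = y).card := by
    intro z hz
    apply Finset.card_equiv (Equiv.mulRight z)
    intro g
    simp [Equiv.mulRight]
  have count2 : ∀ g : G, (Yf.filter fun z => φ (g * z) = y).card = 1 := by
    intro g
    obtain ⟨hinj, himg⟩ := key g
    have hyY' : y ∈ Yf.image (fun z => φ (g * z)) := by rw [himg]; exact hyY
    obtain ⟨z₀, hz₀, hez₀⟩ := Finset.mem_image.mp hyY'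
    rw [Finset.card_eq_one]
    refine ⟨z₀, ?_⟩
    ext w
    simp only [Finset.mem_filter, Finset.mem_singleton]
    constructor
    · rintro ⟨hw, hew⟩
      exact hinj (by rw [hrange]; exact hw) (by rw [hrange]; exact hz₀)
        (hew.trans hez₀.symm)
    · rintro rfl
      exact ⟨hz₀, hez₀⟩
  have hsum : ∑ z ∈ Yf, (Finset.univ.filter fun g : G => φ (g * z) = y).card
      = ∑ g : G, (Yf.filter fun z => φ (g * z) = y).card := by
    simp_rw [Finset.card_filter]
    rw [Finset.sum_comm]
  rw [Finset.sum_congr rfl count1] at hsum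
  rw [Finset.sum_congr rfl (fun g _ => count2 g)] at hsum
  simp only [Finset.sum_const, smul_eq_mul, mul_one] at hsum
  rw [hfib, hncardY, mul_comm, hsum]
  simp
end
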